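/- arXiv:1212.0804 — 6 statements merged into one kernel-verified Lean document; each statement's English description precedes it below -/
import Mathlib

section
/- Let X be a finite set with n elements equipped with three partial orders ≺₁, ≺₂, ≺₃ such that every pair of distinct elements of X is comparable in at least one of the three orders. Then X contains a chain of size at least ⌈n^(1/3)⌉ with respect to one of the three partial orders. -/
/-- A finite set with three partial orders such that every pair of distinct
elements is comparable in at least one of them contains a chain of size
at least `⌈n^(1/3)⌉` with respect to one of the three partial orders. -/
theorem stmt0 (X : Type) [Fintype X] (r : Fin 3 → X → X → Prop)
    (hpo : ∀ i, IsPartialOrder X (r i))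
    (hcomp : ∀ a b : X, a ≠ b → ∃ i, r i a b ∨ r i b a) :
    ∃ (i : Fin 3) (C : Finset X),
      (∀ a ∈ C, ∀ b ∈ C, r i a b ∨ r i b a) ∧
      ⌈(Fintype.card X : ℝ) ^ ((1 : ℝ) / 3)⌉ ≤ (C.card : ℤ) := by
  classical
  by_cases hX : Nonempty X
  swap
  · refine ⟨0, ∅, by simp, ?_⟩
    have h0 : Fintype.card X = 0 := by
      simp [Fintype.card_eq_zero_iff, not_nonempty_iff.mp hX]
    rw [h0]
    simp [Real.zero_rpow (by norm_num : (1:ℝ)/3 ≠ 0)]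
  -- chains with maximum x
  set Ch : Fin 3 → X → Finset (Finset X) := fun i x =>
    Finset.univ.filter (fun C : Finset X => x ∈ C ∧ (∀ a ∈ C, r i a x) ∧
      ∀ a ∈ C, ∀ b ∈ C, r i a b ∨ r i b a) with hCh
  have memCh : ∀ i x (C : Finset X), C ∈ Ch i x ↔
      (x ∈ C ∧ (∀ a ∈ C, r i a x) ∧ ∀ a ∈ C, ∀ b ∈ C, r i a b ∨ r i b a) := by
    intro i x C; simp [hCh]
  set h : Fin 3 → X → ℕ := fun i x => (Ch i x).sup Finset.card with hh
  have hsingle : ∀ i x, ({x} : Finset X) ∈ Ch i x := by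
    intro i x
    rw [memCh]
    refine ⟨Finset.mem_singleton_self x, ?_, ?_⟩
    · intro a ha; rw [Finset.mem_singleton] at ha; rw [ha]; exact (hpo i).refl _
    · intro a ha b hb
      rw [Finset.mem_singleton] at ha hb; rw [ha, hb]
      exact Or.inl ((hpo i).refl _)
  have h1 : ∀ i x, 1 ≤ h i x := by
    intro i x
    have := Finset.le_sup (f := Finset.card) (hsingle i x)
    rwa [Finset.card_singleton] at this
  have hexists : ∀ i x, ∃ C ∈ Ch i x, C.card = h i x := by
    intro i x
    obtain ⟨C, hC, hC'⟩ := Finset.exists_mem_eq_sup (Ch i x) ⟨_, hsingle i x⟩ Finset.card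
    exact ⟨C, hC, hC'.symm⟩
  have hlt : ∀ i (x y : X), r i x y → x ≠ y → h i x < h i y := by
    intro i x y hxy hne
    obtain ⟨C, hC, hcard⟩ := hexists i x
    rw [memCh] at hC
    obtain ⟨hxC, hle, hchain⟩ := hC
    have hyC : y ∉ C := by
      intro hy
      exact hne ((hpo i).antisymm _ _ hxy (hle y hy))
    have hle' : ∀ a ∈ insert y C, r i a y := by
      intro a ha
      rcases Finset.mem_insert.mp ha with h' | ha'
      · rw [h']; exact (hpo i).refl _
      · exact (hpo i).trans _ _ _ (hle a ha') hxy
    have hmem : insert y C ∈ Ch i y := by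
      rw [memCh]
      refine ⟨Finset.mem_insert_self y C, hle', ?_⟩
      intro a ha b hb
      rcases Finset.mem_insert.mp ha with h' | ha'
      · rw [h']; exact Or.inr (hle' b hb)
      · rcases Finset.mem_insert.mp hb with h' | hb'
        · rw [h']; exact Or.inl (hle' a ha)
        · exact hchain a ha' b hb'
    have hstep := Finset.le_sup (f := Finset.card) hmem
    rw [Finset.card_insert_of_notMem hyC, hcard] at hstep
    exact Nat.lt_of_lt_of_le (Nat.lt_succ_self _) hstep
  -- the height function triple is injective
  set f : X → (Fin 3 → ℕ) := fun x i => h i x with hf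
  have hinj : Function.Injective f := by
    intro x y hfxy
    by_contra hne
    obtain ⟨i, hi⟩ := hcomp x y hne
    have := congrFun hfxy i
    rcases hi with hi | hi
    · exact absurd this (Nat.ne_of_lt (hlt i x y hi hne))
    · exact absurd this.symm (Nat.ne_of_lt (hlt i y x hi (Ne.symm hne)))
  set m : ℕ := Finset.univ.sup (fun p : Fin 3 × X => h p.1 p.2) with hm
  have hle_m : ∀ i x, h i x ≤ m := fun i x =>
    Finset.le_sup (f := fun p : Fin 3 × X => h p.1 p.2) (Finset.mem_univ (i, x))
  -- card bound : n ≤ m ^ 3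
  have hcard : Fintype.card X ≤ m ^ 3 := by
    have hmaps : ∀ x : X, f x ∈ Fintype.piFinset (fun _ : Fin 3 => Finset.Icc 1 m) := by
      intro x
      rw [Fintype.mem_piFinset]
      intro i
      rw [Finset.mem_Icc]
      exact ⟨h1 i x, hle_m i x⟩
    have := Finset.card_le_card_of_injOn (s := Finset.univ) f (fun x _ => hmaps x) (hinj.injOn)
    rw [Finset.card_univ] at this
    calc Fintype.card X ≤ _ := this
      _ = m ^ 3 := by
        rw [Fintype.card_piFinset]
        simp [Nat.card_Icc]
  -- find point attaining m
  obtain ⟨⟨i, x⟩, -, hix⟩ := Finset.exists_mem_eq_sup (Finset.univ : Finset (Fin 3 × X))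
    Finset.univ_nonempty (fun p : Fin 3 × X => h p.1 p.2)
  obtain ⟨C, hC, hCcard⟩ := hexists i x
  rw [memCh] at hC
  refine ⟨i, C, hC.2.2, ?_⟩
  have hCm : C.card = m := by rw [hCcard, ← hix]
  rw [Int.ceil_le]
  have hcastle : (Fintype.card X : ℝ) ≤ (m : ℝ) ^ (3 : ℕ) := by
    exact_mod_cast hcard
  have : ((Fintype.card X : ℝ)) ^ ((1:ℝ)/3) ≤ ((m : ℝ) ^ (3:ℕ)) ^ ((1:ℝ)/3) :=
    Real.rpow_le_rpow (by positivity) hcastle (by norm_num)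
  calc ((Fintype.card X : ℝ)) ^ ((1:ℝ)/3) ≤ ((m : ℝ) ^ (3:ℕ)) ^ ((1:ℝ)/3) := this
    _ = (m : ℝ) := by
        rw [← Real.rpow_natCast (m : ℝ) 3, ← Real.rpow_mul (by positivity)]
        norm_num
    _ ≤ ((C.card : ℤ) : ℝ) := by rw [hCm]; norm_num
end

section
/- (Mirsky's theorem) Let X be a finite partially ordered set in which every chain has at most k elements. Then X can be partitioned into at most k antichains. -/
/-- Mirsky's theorem: if every chain of a finite poset has at most `k` elements,
then the poset can be partitioned into at most `k` antichains
(given as the fibers of a function into `Fin k`). -/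
theorem stmt1 (X : Type) [Fintype X] [PartialOrder X] (k : ℕ)
    (hchain : ∀ C : Finset X, (∀ a ∈ C, ∀ b ∈ C, a ≤ b ∨ b ≤ a) → C.card ≤ k) :
    ∃ f : X → Fin k, ∀ a b : X, f a = f b → a ≤ b → a = b := by
  cases isEmpty_or_nonempty X with
  | inl h => exact ⟨fun x => isEmptyElim x, fun a => isEmptyElim a⟩
  | inr h =>
    classical
    have key : ∀ p : LTSeries X, p.length + 1 ≤ k := by
      intro p
      have hinj : Function.Injective p.toFun := p.strictMono.injective
      have := hchain (Finset.univ.image p.toFun) (by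
        intro a ha b hb
        simp only [Finset.mem_image, Finset.mem_univ, true_and] at ha hb
        obtain ⟨i, rfl⟩ := ha
        obtain ⟨j, rfl⟩ := hb
        rcases le_total i j with hij | hij
        · exact Or.inl (p.monotone hij)
        · exact Or.inr (p.monotone hij))
      rwa [Finset.card_image_of_injective _ hinj, Finset.card_univ,
        Fintype.card_fin] at this
    obtain ⟨x0⟩ := h
    have hk : 1 ≤ k := by simpa using key (RelSeries.singleton _ x0)
    have hbd : ∀ x : X, Order.height x ≤ ((k - 1 : ℕ) : ℕ∞) := by
      intro x
      apply Order.height_le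
      intro p _
      exact_mod_cast Nat.le_sub_one_of_lt (key p)
    have hfin : ∀ x : X, Order.height x ≠ ⊤ := fun x =>
      ne_top_of_le_ne_top (by simp) (hbd x)
    have hlt : ∀ x : X, (Order.height x).toNat < k := by
      intro x
      have := (ENat.toNat_le_toNat (hbd x) (by simp))
      simp only [ENat.toNat_coe] at this
      omega
    refine ⟨fun x => ⟨(Order.height x).toNat, hlt x⟩, ?_⟩
    intro a b hfab hab
    by_contra hne
    have hstrict : Order.height a < Order.height b :=
      Order.height_strictMono (lt_of_le_of_ne hab hne) ((hfin a).lt_top)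
    simp only [Fin.mk.injEq] at hfab
    lift Order.height a to ℕ using hfin a with na hna
    lift Order.height b to ℕ using hfin b with nb hnb
    simp only [ENat.toNat_coe] at hfab
    rw [hfab] at hstrict
    exact lt_irrefl _ hstrict
end

section
/- Every maximal planar graph on at least 4 vertices is 3-connected. -/
/-!
In a triangulated map the neighbours of a vertex `u`, read off in rotation order, form a closed
walk, and simplicity makes every vertex occur on it at most once per turn. So if at most one
other vertex `v` is removed together with `u`, any two surviving neighbours of `u` are still
joined by going round `u` the other way. Every edge `uv` also lies on a triangle `uvw`. A walk
between two vertices outside a set `S` of at most two vertices can therefore be rerouted around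
each vertex of `S` it meets, through `w` when it uses the edge joining both vertices of `S`.
-/

theorem Set.exists_subset_pair_of_ncard_le_two {V : Type*} {S : Set V} {u : V}
    (hS : S.ncard ≤ 2) (hu : u ∈ S) (hfin : S.Finite := by toFinite_tac) :
    ∃ v, S ⊆ {u, v} := by
  have : Nonempty V := ⟨u⟩
  have h1 : (S \ {u}).ncard ≤ 1 := by
    rw [Set.ncard_sdiff_singleton_of_mem hu]; omega
  obtain ⟨v, hv⟩ := (Set.ncard_le_one_iff_subset_singleton hfin.sdiff).mp h1
  exact ⟨v, Set.sdiff_subset_iff.mp hv⟩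

namespace SimpleGraph

variable {V : Type*} {G : SimpleGraph V} {S : Set V}

lemma reachable_induce_of_chain {f : ℕ → V} {a b : ℕ} (hab : a ≤ b)
    (hadj : ∀ k, G.Adj (f k) (f (k + 1))) (hf : ∀ k, a ≤ k → k ≤ b → f k ∉ S) :
    (G.induce Sᶜ).Reachable ⟨f a, hf a le_rfl hab⟩ ⟨f b, hf b hab le_rfl⟩ := by
  induction b, hab using Nat.le_induction with
  | base => rfl
  | succ b hab ih =>
    exact (ih fun k hak hkb => hf k hak (by omega)).trans (Adj.reachable (hadj b))

lemma reachable_induce_of_cycle {f : ℕ → V} {m j : ℕ} (hj : j < m) (hcycle : f m = f 0)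
    (hadj : ∀ k, G.Adj (f k) (f (k + 1)))
    (hS : ∀ i < m, ∀ k < m, f i ∈ S → f k ∈ S → i = k)
    (h0 : f 0 ∉ S) (hjS : f j ∉ S) :
    (G.induce Sᶜ).Reachable ⟨f 0, h0⟩ ⟨f j, hjS⟩ := by
  by_cases hfwd : ∀ k ≤ j, f k ∉ S
  · exact reachable_induce_of_chain (Nat.zero_le j) hadj fun k _ hk => hfwd k hk
  push Not at hfwd
  obtain ⟨i, hij, hi⟩ := hfwd
  have hbwd : ∀ k, j ≤ k → k ≤ m → f k ∉ S := by
    intro k hjk hkm hk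
    rcases hkm.lt_or_eq with hkm | rfl
    · obtain rfl : i = k := hS i (by omega) k hkm hi hk
      obtain rfl : j = i := by omega
      exact hjS hi
    · exact h0 (hcycle ▸ hk)
  have hm : (⟨f m, hbwd m hj.le le_rfl⟩ : ↥Sᶜ) = ⟨f 0, h0⟩ := Subtype.ext hcycle
  exact hm ▸ (reachable_induce_of_chain hj.le hadj hbwd).symm

/-- Every vertex of `N[u] \ S` reaches `b` in `G - S`: this is carried back along a walk from
`u` to `b`, bridging a step inside `S` through the link of its first vertex. -/
theorem Preconnected.induce_compl (hG : G.Preconnected)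
    (hlink : ∀ u ∈ S, ∀ x y : V, (hx : x ∉ S) → (hy : y ∉ S) →
      G.Adj u x → G.Adj u y → (G.induce Sᶜ).Reachable ⟨x, hx⟩ ⟨y, hy⟩)
    (htri : ∀ u ∈ S, ∀ v ∈ S, G.Adj u v → ∃ w ∉ S, G.Adj u w ∧ G.Adj v w) :
    (G.induce Sᶜ).Preconnected := by
  intro a b
  suffices h : ∀ u, Relation.ReflTransGen G.Adj u b →
      ∀ x : ↥Sᶜ, (x : V) = u ∨ G.Adj u x → (G.induce Sᶜ).Reachable x b from
    h a ((reachable_iff_reflTransGen _ _).mp (hG a b)) a (Or.inl rfl)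
  have hnear : ∀ u x : ↥Sᶜ, (x : V) = u ∨ G.Adj u x → (G.induce Sᶜ).Reachable x u := by
    rintro u x (hx | hx)
    · rw [Subtype.ext hx]
    · exact Adj.reachable hx.symm
  intro u hub
  induction hub using Relation.ReflTransGen.head_induction_on with
  | refl => exact hnear b
  | @head u u' huu' _ ih =>
    intro x hx
    by_cases hu : u ∈ S
    · have hux : G.Adj u x := hx.resolve_left fun h => x.2 (h ▸ hu)
      by_cases hu' : u' ∈ S
      · obtain ⟨w, hwS, huw, hu'w⟩ := htri u hu u' hu' huu'
        exact (hlink u hu x w x.2 hwS hux huw).trans (ih ⟨w, hwS⟩ (Or.inr hu'w))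
      · exact (hlink u hu x u' x.2 hu' hux huu').trans (ih ⟨u', hu'⟩ (Or.inl rfl))
    · exact (hnear ⟨u, hu⟩ x hx).trans (ih ⟨u, hu⟩ (Or.inr huu'.symm))

end SimpleGraph

namespace CombinatorialMap

open Function SimpleGraph

variable {V D : Type*} {σ α : Equiv.Perm D} {vtx : D → V}

variable (α vtx) in
def graph : SimpleGraph V := SimpleGraph.fromRel fun a b => ∃ d, vtx d = a ∧ vtx (α d) = b

lemma graph_adj_vtx (hnoloop : ∀ d, vtx (α d) ≠ vtx d) (d : D) :
    (graph α vtx).Adj (vtx d) (vtx (α d)) :=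
  (fromRel_adj _ _ _).mpr ⟨(hnoloop d).symm, Or.inl ⟨d, rfl, rfl⟩⟩

lemma exists_dart_of_graph_adj (hinv : ∀ d, α (α d) = d) {a b : V}
    (h : (graph α vtx).Adj a b) : ∃ d, vtx d = a ∧ vtx (α d) = b := by
  obtain ⟨-, ⟨d, rfl, rfl⟩ | ⟨d, rfl, rfl⟩⟩ := (fromRel_adj _ _ _).mp h
  · exact ⟨d, rfl, rfl⟩
  · exact ⟨α d, rfl, by rw [hinv]⟩

lemma vtx_pow_apply (hvσ : ∀ d, vtx (σ d) = vtx d) (n : ℕ) (d : D) :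
    vtx ((σ ^ n) d) = vtx d := by
  induction n with
  | zero => rfl
  | succ n ih => rw [pow_succ', Equiv.Perm.mul_apply, hvσ, ih]

lemma graph_preconnected (hvσ : ∀ d, vtx (σ d) = vtx d) (hsurj : Surjective vtx)
    (hconn : ∀ d e : D, Relation.ReflTransGen (fun a b => σ a = b ∨ α a = b) d e)
    (hnoloop : ∀ d, vtx (α d) ≠ vtx d) : (graph α vtx).Preconnected := by
  have hdarts : ∀ d e, (graph α vtx).Reachable (vtx d) (vtx e) := by
    intro d e
    induction hconn d e with
    | refl => rfl
    | tail _ hstep ih =>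
      rcases hstep with rfl | rfl
      · rwa [hvσ]
      · exact ih.trans (graph_adj_vtx hnoloop _).reachable
  intro a b
  obtain ⟨d, rfl⟩ := hsurj a
  obtain ⟨e, rfl⟩ := hsurj b
  exact hdarts d e

/-- The face through `α d` is the triangle `vtx (α d)`, `vtx d`, `vtx (α (σ d))`. -/
lemma graph_adj_rotate (hinv : ∀ d, α (α d) = d) (hvσ : ∀ d, vtx (σ d) = vtx d)
    (htri : ∀ d, ((σ * α) ^ 3) d = d ∧ (σ * α) d ≠ d)
    (hnoloop : ∀ d, vtx (α d) ≠ vtx d) (d : D) :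
    (graph α vtx).Adj (vtx (α (σ d))) (vtx (α d)) := by
  have hface : σ (α (σ (α (σ d)))) = α d := by
    simpa [pow_succ, hinv] using (htri (α d)).1
  have h := graph_adj_vtx hnoloop (σ (α (σ d)))
  rwa [hvσ, ← hvσ (α (σ (α (σ d)))), hface] at h

lemma exists_common_neighbor (hinv : ∀ d, α (α d) = d) (hvσ : ∀ d, vtx (σ d) = vtx d)
    (htri : ∀ d, ((σ * α) ^ 3) d = d ∧ (σ * α) d ≠ d)
    (hnoloop : ∀ d, vtx (α d) ≠ vtx d) {u v : V} (huv : (graph α vtx).Adj u v) :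
    ∃ w, (graph α vtx).Adj u w ∧ (graph α vtx).Adj v w := by
  obtain ⟨d, rfl, rfl⟩ := exists_dart_of_graph_adj hinv huv
  refine ⟨vtx (α (σ (α d))), ?_, ?_⟩
  · simpa [hinv] using (graph_adj_rotate hinv hvσ htri hnoloop (α d)).symm
  · simpa [hvσ] using graph_adj_vtx hnoloop (σ (α d))

lemma reachable_induce_compl_of_subset_pair [Finite D] (hinv : ∀ d, α (α d) = d)
    (hvσ : ∀ d, vtx (σ d) = vtx d)
    (hfib : ∀ d e, vtx d = vtx e → ∃ n : ℕ, (σ ^ n) d = e)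
    (htri : ∀ d, ((σ * α) ^ 3) d = d ∧ (σ * α) d ≠ d)
    (hnoloop : ∀ d, vtx (α d) ≠ vtx d)
    (hsimple : ∀ d e, vtx d = vtx e → vtx (α d) = vtx (α e) → e = d)
    {S : Set V} {u v : V} (hS : S ⊆ {u, v}) {x y : V} (hx : x ∉ S) (hy : y ∉ S)
    (hux : (graph α vtx).Adj u x) (huy : (graph α vtx).Adj u y) :
    ((graph α vtx).induce Sᶜ).Reachable ⟨x, hx⟩ ⟨y, hy⟩ := by
  obtain ⟨d, rfl, rfl⟩ := exists_dart_of_graph_adj hinv hux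
  obtain ⟨e, hed, rfl⟩ := exists_dart_of_graph_adj hinv huy
  obtain ⟨n, rfl⟩ := hfib d e hed.symm
  set m := minimalPeriod σ d with hm_def
  have hm : 0 < m := minimalPeriod_pos_of_mem_periodicPts (σ.injective.mem_periodicPts d)
  simp only [Equiv.Perm.coe_pow] at hy ⊢
  let f : ℕ → V := fun k => vtx (α (σ^[k] d))
  have hvtx : ∀ k, vtx (σ^[k] d) = vtx d := fun k => by
    rw [← Equiv.Perm.coe_pow, vtx_pow_apply hvσ]
  have hfS : ∀ i < m, ∀ k < m, f i ∈ S → f k ∈ S → i = k := by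
    have hfv : ∀ k, f k ∈ S → f k = v := fun k hk =>
      (hS hk).resolve_left fun h => hnoloop _ (h.trans (hvtx k).symm)
    intro i hi k hk hfi hfk
    exact iterate_injOn_Iio_minimalPeriod hi hk (hsimple _ _ ((hvtx i).trans (hvtx k).symm)
      ((hfv i hfi).trans (hfv k hfk).symm)).symm
  have hfadj : ∀ k, (graph α vtx).Adj (f k) (f (k + 1)) := fun k => by
    simpa only [f, iterate_succ_apply'] using (graph_adj_rotate hinv hvσ htri hnoloop _).symm
  have hcycle : f m = f 0 := by
    simp only [f, hm_def, iterate_minimalPeriod, iterate_zero_apply]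
  have hmod : f (n % m) = f n := by
    simp only [f, hm_def, iterate_mod_minimalPeriod_eq]
  have hy' : f (n % m) ∉ S := hmod ▸ hy
  rw [show (⟨_, hy⟩ : ↥Sᶜ) = ⟨_, hy'⟩ from Subtype.ext hmod.symm]
  exact reachable_induce_of_cycle (Nat.mod_lt n hm) hcycle hfadj hfS hx hy'

end CombinatorialMap

theorem stmt9_general (V D : Type) [Fintype V] [Fintype D]
    (σ α : Equiv.Perm D) (vtx : D → V)
    (hinv : ∀ d, α (α d) = d)
    (hvσ : ∀ d, vtx (σ d) = vtx d)
    (hsurj : Function.Surjective vtx)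
    (hfib : ∀ d e, vtx d = vtx e → ∃ n : ℕ, (σ ^ n) d = e)
    (hconn : ∀ d e : D, Relation.ReflTransGen (fun a b => σ a = b ∨ α a = b) d e)
    (htri : ∀ d : D, ((σ * α) ^ 3) d = d ∧ (σ * α) d ≠ d)
    (hnoloop : ∀ d : D, vtx (α d) ≠ vtx d)
    (hsimple : ∀ d e : D, vtx d = vtx e → vtx (α d) = vtx (α e) → e = d)
    (hn : 4 ≤ Fintype.card V) :
    ∀ S : Set V, S.ncard ≤ 2 →
      ((SimpleGraph.fromRel (fun a b => ∃ d, vtx d = a ∧ vtx (α d) = b)).induce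
        Sᶜ).Connected := by
  intro S hS
  have hSc : Sᶜ.Nonempty := by
    rw [Set.nonempty_compl]
    rintro rfl
    rw [Set.ncard_univ, Nat.card_eq_fintype_card] at hS
    omega
  have hG := CombinatorialMap.graph_preconnected hvσ hsurj hconn hnoloop
  refine (SimpleGraph.connected_iff _).mpr ⟨hG.induce_compl ?_ ?_, hSc.to_subtype⟩
  · intro u hu x y hx hy hux huy
    obtain ⟨v, hSuv⟩ := Set.exists_subset_pair_of_ncard_le_two hS hu
    exact CombinatorialMap.reachable_induce_compl_of_subset_pair hinv hvσ hfib htri hnoloop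
      hsimple hSuv hx hy hux huy
  · intro u hu v hv huv
    obtain ⟨w, huw, hvw⟩ := CombinatorialMap.exists_common_neighbor hinv hvσ htri hnoloop huv
    refine ⟨w, fun hw => ?_, huw, hvw⟩
    have h3 : ({u, v, w} : Set V).ncard = 3 :=
      Set.ncard_eq_three.mpr ⟨u, v, w, huv.ne, huw.ne, hvw.ne, rfl⟩
    have := Set.ncard_le_ncard (Set.insert_subset hu (Set.insert_subset hv
      (Set.singleton_subset_iff.mpr hw)))
    omega

/-- Every maximal planar graph on at least 4 vertices is 3-connected.
The graph is given together with a planar embedding as a combinatorial map on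
darts `D`: `σ` is the rotation around vertices, `α` the fixed-point-free edge
involution, `vtx` assigns to each dart its vertex (its fibers are exactly the
`σ`-orbits), the map is connected, satisfies Euler's formula, is simple, and
every face (orbit of `σ * α`) is a triangle.  The conclusion is that removing
any set of at most 2 vertices leaves the graph connected. -/
theorem stmt9 (V D : Type) [Fintype V] [Fintype D]
    (σ α : Equiv.Perm D) (vtx : D → V)
    (hinv : ∀ d, α (α d) = d) (hnf : ∀ d, α d ≠ d)
    (hvσ : ∀ d, vtx (σ d) = vtx d)
    (hsurj : Function.Surjective vtx)
    (hfib : ∀ d e, vtx d = vtx e → ∃ n : ℕ, (σ ^ n) d = e)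
    (hconn : ∀ d e : D, Relation.ReflTransGen (fun a b => σ a = b ∨ α a = b) d e)
    (heuler : (Fintype.card V : ℤ)
        - (Nat.card (Quot (fun a b : D => α a = b)) : ℤ)
        + (Nat.card (Quot (fun a b : D => (σ * α) a = b)) : ℤ) = 2)
    (htri : ∀ d : D, ((σ * α) ^ 3) d = d ∧ (σ * α) d ≠ d)
    (hnoloop : ∀ d : D, vtx (α d) ≠ vtx d)
    (hsimple : ∀ d e : D, vtx d = vtx e → vtx (α d) = vtx (α e) → e = d)
    (hn : 4 ≤ Fintype.card V) :
    ∀ S : Set V, S.ncard ≤ 2 →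
      ((SimpleGraph.fromRel (fun a b => ∃ d, vtx d = a ∧ vtx (α d) = b)).induce
        Sᶜ).Connected :=
  stmt9_general V D σ α vtx hinv hvσ hsurj hfib hconn htri hnoloop hsimple hn
end

section
/- Let G be a maximal plane graph with n vertices containing a sequence of k nested separating triangles t₁ ≻ t₂ ≻ ... ≻ t_k. Then the union of the vertex sets of t₁, ..., t_k contains at least k + 2 distinct vertices. -/
/-!
If a vertex of the triangle `q` lies strictly inside the triangle `p` and another vertex of `q`
lay outside it, the edge of `q` joining them would leave `p` through a point of an edge of `p`;
in a straight-line drawing that point must be a common endpoint, which is impossible. So the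
closed triangles `t i` are nested, and the vertex of `t (i + 1)` inside `t i` lies in the
interior of every earlier triangle, hence is a vertex of none of them: each triangle after the
first contributes a new vertex.
-/

open Set

theorem IsPreconnected.inter_frontier_nonempty_of_mem_interior {X : Type*} [TopologicalSpace X]
    {s t : Set X} (hs : IsPreconnected s) {x y : X} (hx : x ∈ s) (hxt : x ∈ interior t)
    (hy : y ∈ s) (hyt : y ∉ closure t) : (s ∩ frontier t).Nonempty := by
  by_contra h
  have hsub : s ⊆ interior t ∪ (closure t)ᶜ := by
    intro z hz
    by_cases hzt : z ∈ closure t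
    · exact .inl (by_contra fun hzi => h ⟨z, hz, hzt, hzi⟩)
    · exact .inr hzt
  obtain ⟨z, -, hzi, hzc⟩ := hs _ _ isOpen_interior isClosed_closure.isOpen_compl hsub
    ⟨x, hx, hxt⟩ ⟨y, hy, hyt⟩
  exact hzc (interior_subset_closure hzi)

section AffineBasis

variable {ι E : Type*} [NormedAddCommGroup E] [NormedSpace ℝ E]

theorem AffineBasis.apply_notMem_interior_convexHull [Finite ι] [Nontrivial ι]
    (b : AffineBasis ι ℝ E) (j : ι) : b j ∉ interior (convexHull ℝ (range b)) := by
  rw [b.interior_convexHull]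
  obtain ⟨i, hij⟩ := exists_ne j
  intro h
  simpa [b.coord_apply_ne hij] using h i

theorem AffineBasis.exists_mem_segment_of_mem_frontier_convexHull (b : AffineBasis (Fin 3) ℝ E)
    {x : E} (hx : x ∈ frontier (convexHull ℝ (range b))) :
    ∃ a c, a ≠ c ∧ x ∈ segment ℝ (b a) (b c) := by
  rw [frontier, ((finite_range b).isClosed_convexHull ℝ).closure_eq, b.interior_convexHull,
    b.convexHull_eq_nonneg_coord] at hx
  obtain ⟨hnonneg, hnotpos⟩ := hx
  simp only [mem_ofPred_eq, not_forall, not_lt] at hnonneg hnotpos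
  obtain ⟨j, hj⟩ := hnotpos
  have hj0 : b.coord j x = 0 := le_antisymm hj (hnonneg j)
  have hsum := b.sum_coord_apply_eq_one x
  have hcomb := b.linear_combination_coord_eq_self x
  rw [Fin.sum_univ_succAbove _ j, Fin.sum_univ_two] at hsum hcomb
  refine ⟨j.succAbove 0, j.succAbove 1, Fin.succAbove_right_injective.ne (by decide),
    b.coord (j.succAbove 0) x, b.coord (j.succAbove 1) x, hnonneg _, hnonneg _, by linarith, ?_⟩
  simpa [hj0] using hcomb

theorem exists_affineBasis_eq_of_nonempty_interior_convexHull [FiniteDimensional ℝ E] [Fintype ι]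
    {p : ι → E} (hcard : Fintype.card ι = Module.finrank ℝ E + 1)
    (hp : (interior (convexHull ℝ (range p))).Nonempty) : ∃ b : AffineBasis ι ℝ E, ⇑b = p := by
  have htot := affineSpan_eq_top_of_nonempty_interior hp
  have hind : AffineIndependent ℝ p := by
    rw [affineIndependent_iff_finrank_vectorSpan_eq ℝ p hcard,
      AffineSubspace.vectorSpan_eq_top_of_affineSpan_eq_top ℝ E E htot, finrank_top]
  exact ⟨⟨p, hind, htot⟩, rfl⟩

end AffineBasis

theorem triangle_vertex_notMem_interior (p : Fin 3 → ℝ × ℝ) (j : Fin 3) :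
    p j ∉ interior (convexHull ℝ (range p)) := fun h => by
  obtain ⟨b, rfl⟩ :=
    exists_affineBasis_eq_of_nonempty_interior_convexHull (by simp [Module.finrank_prod]) ⟨_, h⟩
  exact b.apply_notMem_interior_convexHull j h

theorem triangle_exists_mem_segment_of_mem_frontier {p : Fin 3 → ℝ × ℝ}
    (hp : (interior (convexHull ℝ (range p))).Nonempty) {x : ℝ × ℝ}
    (hx : x ∈ frontier (convexHull ℝ (range p))) : ∃ a c, a ≠ c ∧ x ∈ segment ℝ (p a) (p c) := by
  obtain ⟨b, rfl⟩ :=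
    exists_affineBasis_eq_of_nonempty_interior_convexHull (by simp [Module.finrank_prod]) hp
  exact b.exists_mem_segment_of_mem_frontier_convexHull hx

def SimpleGraph.EdgesMeetOnlyAtEndpoints {V : Type*} (G : SimpleGraph V) (pos : V → ℝ × ℝ) :
    Prop :=
  ∀ a b c d : V, G.Adj a b → G.Adj c d → ({a, b} : Set V) ≠ {c, d} →
    segment ℝ (pos a) (pos b) ∩ segment ℝ (pos c) (pos d) ⊆ pos '' (({a, b} : Set V) ∩ {c, d})

theorem convexHull_triangle_subset_of_mem_interior {V : Type*} {G : SimpleGraph V}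
    {pos : V → ℝ × ℝ} (hG : G.EdgesMeetOnlyAtEndpoints pos) {p q : Fin 3 → V}
    (hp : ∀ j j', j ≠ j' → G.Adj (p j) (p j')) (hq : ∀ j j', j ≠ j' → G.Adj (q j) (q j'))
    {j₀ : Fin 3} (hj₀ : pos (q j₀) ∈ interior (convexHull ℝ (range fun j => pos (p j)))) :
    convexHull ℝ (range fun j => pos (q j)) ⊆ convexHull ℝ (range fun j => pos (p j)) := by
  set K := convexHull ℝ (range fun j => pos (p j))
  have hK : IsClosed K := (finite_range _).isClosed_convexHull ℝ
  refine convexHull_min ?_ (convex_convexHull ℝ _)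
  rintro _ ⟨j, rfl⟩
  by_contra hj
  obtain ⟨x, hxseg, hxK⟩ :=
    (convex_segment _ _).isPreconnected.inter_frontier_nonempty_of_mem_interior
      (left_mem_segment ℝ _ _) hj₀ (right_mem_segment ℝ _ _) (hK.closure_eq ▸ hj)
  obtain ⟨a, c, hac, hxac⟩ := triangle_exists_mem_segment_of_mem_frontier ⟨_, hj₀⟩ hxK
  have hq₀ : q j₀ ∉ ({p a, p c} : Set V) := by
    rintro (h | h) <;> exact triangle_vertex_notMem_interior _ _ (h ▸ hj₀)
  have hne : j₀ ≠ j := by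
    rintro rfl
    exact hj (interior_subset hj₀)
  obtain ⟨u, ⟨rfl | rfl, hu⟩, hux⟩ := hG _ _ _ _ (hq _ _ hne) (hp _ _ hac)
    (fun h => hq₀ (h ▸ by simp)) ⟨hxseg, hxac⟩
  · exact hq₀ hu
  · subst hux
    exact hj (hK.frontier_subset hxK)

theorem ncard_add_le_ncard_iUnion {V E : Type*} [Finite V] {k : ℕ} (S : Fin (k + 1) → Set V)
    (A : Fin (k + 1) → Set E) (f : V → E) (hA : Antitone A) (hS : ∀ i, ∀ v ∈ S i, f v ∉ A i)
    (hnew : ∀ i : Fin k, ∃ v ∈ S i.succ, f v ∈ A i.castSucc) :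
    (S 0).ncard + k ≤ (⋃ i, S i).ncard := by
  induction k with
  | zero => exact ncard_le_ncard (subset_iUnion S 0)
  | succ k ih =>
    have hprev := ih (S ∘ Fin.castSucc) (A ∘ Fin.castSucc)
      (hA.comp_monotone Fin.strictMono_castSucc.monotone) (fun i => hS _)
      (fun i => by simpa only [Function.comp, Fin.succ_castSucc] using hnew i.castSucc)
    obtain ⟨v, hvS, hvA⟩ := hnew (Fin.last k)
    have hv : v ∉ ⋃ i, S (Fin.castSucc i) := by
      simp only [mem_iUnion, not_exists]
      exact fun i hvi => hS _ v hvi (hA (Fin.castSucc_le_castSucc_iff.2 (Fin.le_last i)) hvA)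
    have hsub : insert v (⋃ i, S (Fin.castSucc i)) ⊆ ⋃ i, S i :=
      insert_subset (mem_iUnion_of_mem _ hvS) (iUnion_subset fun i => subset_iUnion S _)
    calc (S 0).ncard + (k + 1) ≤ (insert v (⋃ i, S (Fin.castSucc i))).ncard := by
          simp only [Function.comp_apply, Fin.castSucc_zero] at hprev
          rw [ncard_insert_of_notMem hv]
          omega
      _ ≤ (⋃ i, S i).ncard := ncard_le_ncard hsub

theorem stmt14_general (V : Type) [Fintype V] (G : SimpleGraph V) (pos : V → ℝ × ℝ)
    (hnc : ∀ a b c d : V, G.Adj a b → G.Adj c d → ({a, b} : Set V) ≠ {c, d} →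
      segment ℝ (pos a) (pos b) ∩ segment ℝ (pos c) (pos d) ⊆
        pos '' (({a, b} : Set V) ∩ {c, d}))
    (k : ℕ) (hk : 1 ≤ k) (t : Fin k → Fin 3 → V)
    (htri : ∀ i, Function.Injective (t i) ∧
      ∀ j j' : Fin 3, j ≠ j' → G.Adj (t i j) (t i j'))
    (hnest : ∀ (i : Fin k) (h : i.val + 1 < k), ∃ j : Fin 3,
      pos (t ⟨i.val + 1, h⟩ j) ∈
        interior (convexHull ℝ (Set.range (fun j' => pos (t i j'))))) :
    k + 2 ≤ (⋃ i, Set.range (t i)).ncard := by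
  obtain ⟨k, rfl⟩ : ∃ m, k = m + 1 := ⟨k - 1, by omega⟩
  set A : Fin (k + 1) → Set (ℝ × ℝ) := fun i =>
    interior (convexHull ℝ (range fun j => pos (t i j)))
  have hnew : ∀ i : Fin k, ∃ v ∈ range (t i.succ), pos v ∈ A i.castSucc := fun i => by
    obtain ⟨j, hj⟩ := hnest i.castSucc (by simp)
    exact ⟨_, mem_range_self j, hj⟩
  have hA : Antitone A := Fin.antitone_iff_succ_le.2 fun i => by
    obtain ⟨v, ⟨j, rfl⟩, hv⟩ := hnew i
    exact interior_mono (convexHull_triangle_subset_of_mem_interior hnc (htri _).2 (htri _).2 hv)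
  have hvertex : ∀ i, ∀ v ∈ range (t i), pos v ∉ A i := by
    rintro i _ ⟨j, rfl⟩
    exact triangle_vertex_notMem_interior (fun j => pos (t i j)) j
  have hcount := ncard_add_le_ncard_iUnion _ A pos hA hvertex hnew
  rw [ncard_range_of_injective (htri 0).1, Nat.card_eq_fintype_card, Fintype.card_fin] at hcount
  omega

/-- Let `G` be a maximal plane graph with `n` vertices, drawn in the plane with
straight-line edges (positions `pos`, injective, edges meeting only at common
endpoints, no vertex in the interior of an edge; maximality of the planar graph
is expressed by `|E| = 3n − 6`).  If `G` contains a sequence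
`t 0 ≻ t 1 ≻ … ≻ t (k-1)` of nested separating triangles (each `t (i+1)` has a
vertex strictly inside the triangle `t i`), then the union of their vertex sets
contains at least `k + 2` distinct vertices. -/
theorem stmt14 (V : Type) [Fintype V] (G : SimpleGraph V) (pos : V → ℝ × ℝ)
    (hinj : Function.Injective pos)
    (hnc : ∀ a b c d : V, G.Adj a b → G.Adj c d → ({a, b} : Set V) ≠ {c, d} →
      segment ℝ (pos a) (pos b) ∩ segment ℝ (pos c) (pos d) ⊆
        pos '' (({a, b} : Set V) ∩ {c, d}))
    (hvert : ∀ a b v : V, G.Adj a b → pos v ∈ segment ℝ (pos a) (pos b) →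
      v = a ∨ v = b)
    (hmax : G.edgeSet.ncard = 3 * Fintype.card V - 6)
    (k : ℕ) (hk : 1 ≤ k) (t : Fin k → Fin 3 → V)
    (htri : ∀ i, Function.Injective (t i) ∧
      ∀ j j' : Fin 3, j ≠ j' → G.Adj (t i j) (t i j'))
    (hsep : ∀ i, ¬ (G.induce {v : V | v ∉ Set.range (t i)}).Preconnected)
    (hnest : ∀ (i : Fin k) (h : i.val + 1 < k), ∃ j : Fin 3,
      pos (t ⟨i.val + 1, h⟩ j) ∈
        interior (convexHull ℝ (Set.range (fun j' => pos (t i j'))))) :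
    k + 2 ≤ (⋃ i, Set.range (t i)).ncard :=
  stmt14_general V G pos hnc k hk t htri hnest
end

section
/- Let p₁, ..., p_k be points in the plane with strictly increasing x-coordinates, let σ > 0 exceed the absolute value of the slope of every segment p̄ᵢp̄ᵢ₊₁, and let q₁, ..., q_h be points all with the same x-coordinate x_k + 1 and with q_j = (x_k + 1, −σ(x_k + j)). Then for any indices i₁ ≤ i₂ and j₂ ≤ j₁, the open segments p̄_{i₁}q̄_{j₁} and p̄_{i₂}q̄_{j₂} do not cross (they are disjoint except possibly at shared endpoints). -/
/-- Chain lemma: for `1 ≤ a < b ≤ k`, `x a < x b` and the slope of the chord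
from `p a` to `p b` is greater than `-σ`. -/
lemma stmt16_chain (k : ℕ) (x y : ℕ → ℝ) (σ : ℝ)
    (hmono : ∀ i, 1 ≤ i → i + 1 ≤ k → x i < x (i + 1))
    (hslope : ∀ i, 1 ≤ i → i + 1 ≤ k → |y (i + 1) - y i| < σ * (x (i + 1) - x i)) :
    ∀ a b, 1 ≤ a → a < b → b ≤ k → x a < x b ∧ -σ * (x b - x a) < y b - y a := by
  intro a b
  induction b with
  | zero => omega
  | succ n ih =>
    intro ha hab hbk
    rcases eq_or_lt_of_le (Nat.lt_succ_iff.mp hab) with hcase | hcase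
    · subst hcase
      have h1 := hmono a ha hbk
      have h2 := (abs_lt.mp (hslope a ha hbk)).1
      exact ⟨h1, by linarith⟩
    · have hn1 : 1 ≤ n := by omega
      obtain ⟨hx, hy⟩ := ih ha hcase (by omega)
      have h1 := hmono n hn1 hbk
      have h2 := (abs_lt.mp (hslope n hn1 hbk)).1
      exact ⟨by linarith, by linarith⟩

set_option maxHeartbeats 1600000 in
/-- Points `p i = (x i, y i)`, `i = 1, …, k`, have strictly increasing
`x`-coordinates and every consecutive segment has slope of absolute value less
than `σ > 0`. The points `q j = (x k + 1, −σ(x k + j))`, `j = 1, …, h`, lie on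
a common vertical line far below, so that every segment from `p i` to `q j`
has slope at most `−σ`. Then for `i₁ ≤ i₂` and `j₂ ≤ j₁`, the segments
`p i₁ – q j₁` and `p i₂ – q j₂` do not cross: they meet only in common
endpoints. -/
theorem stmt16 (k h : ℕ) (x y : ℕ → ℝ) (σ : ℝ) (hσ : 0 < σ)
    (hmono : ∀ i, 1 ≤ i → i + 1 ≤ k → x i < x (i + 1))
    (hslope : ∀ i, 1 ≤ i → i + 1 ≤ k → |y (i + 1) - y i| < σ * (x (i + 1) - x i))
    (hsteep : ∀ i j, 1 ≤ i → i ≤ k → 1 ≤ j → j ≤ h →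
      -σ * (x k + j) - y i ≤ -σ * (x k + 1 - x i)) :
    ∀ i₁ i₂ j₁ j₂ : ℕ, 1 ≤ i₁ → i₁ ≤ i₂ → i₂ ≤ k → 1 ≤ j₂ → j₂ ≤ j₁ → j₁ ≤ h →
      (i₁, j₁) ≠ (i₂, j₂) →
      segment ℝ ((x i₁, y i₁) : ℝ × ℝ) ((x k + 1, -σ * (x k + j₁)) : ℝ × ℝ) ∩
        segment ℝ ((x i₂, y i₂) : ℝ × ℝ) ((x k + 1, -σ * (x k + j₂)) : ℝ × ℝ) ⊆
      ({(x i₁, y i₁), (x k + 1, -σ * (x k + j₁))} ∩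
        {(x i₂, y i₂), (x k + 1, -σ * (x k + j₂))} : Set (ℝ × ℝ)) := by
  intro i₁ i₂ j₁ j₂ hi1 h12 h2k hj2 hj21 hj1h hne z hz
  obtain ⟨hz1, hz2⟩ := hz
  obtain ⟨a, b, ha, hb, hab, hz1⟩ := hz1
  obtain ⟨c, d, hc, hd, hcd, hz2⟩ := hz2
  have e1 : a * x i₁ + b * (x k + 1) = z.1 := by
    have := congrArg Prod.fst hz1; simpa using this
  have e2 : a * y i₁ + b * (-σ * (x k + (j₁ : ℝ))) = z.2 := by
    have := congrArg Prod.snd hz1; simpa using this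
  have e3 : c * x i₂ + d * (x k + 1) = z.1 := by
    have := congrArg Prod.fst hz2; simpa using this
  have e4 : c * y i₂ + d * (-σ * (x k + (j₂ : ℝ))) = z.2 := by
    have := congrArg Prod.snd hz2; simpa using this
  have hx1k : x i₁ ≤ x k := by
    rcases eq_or_lt_of_le (le_trans h12 h2k) with hcase | hcase
    · rw [hcase]
    · exact (stmt16_chain k x y σ hmono hslope i₁ k hi1 hcase le_rfl).1.le
  have hB : (0:ℝ) < x k + 1 - x i₁ := by linarith
  have hst1 : -σ * (x k + (j₁ : ℝ)) - y i₁ ≤ -σ * (x k + 1 - x i₁) :=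
    hsteep i₁ j₁ hi1 (le_trans h12 h2k) (le_trans hj2 hj21) hj1h
  -- the affine functional vanishing on segment 1, evaluated at z, is zero
  have hfz : (z.2 - y i₁) * (x k + 1 - x i₁)
      - (z.1 - x i₁) * (-σ * (x k + (j₁ : ℝ)) - y i₁) = 0 := by
    rw [← e1, ← e2]
    have hb' : b = 1 - a := by linarith
    rw [hb']; ring
  have key : c * ((y i₂ - y i₁) * (x k + 1 - x i₁)
        - (x i₂ - x i₁) * (-σ * (x k + (j₁ : ℝ)) - y i₁))
      + d * ((-σ * (x k + (j₂ : ℝ)) - y i₁) * (x k + 1 - x i₁)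
        - (x k + 1 - x i₁) * (-σ * (x k + (j₁ : ℝ)) - y i₁)) = 0 := by
    have hd' : d = 1 - c := by linarith
    rw [← hfz, ← e3, ← e4, hd']; ring
  have hFp : i₁ < i₂ →
      0 < (y i₂ - y i₁) * (x k + 1 - x i₁)
        - (x i₂ - x i₁) * (-σ * (x k + (j₁ : ℝ)) - y i₁) := by
    intro hlt
    obtain ⟨hxlt, hylt⟩ := stmt16_chain k x y σ hmono hslope i₁ i₂ hi1 hlt h2k
    nlinarith [mul_pos (by linarith : (0:ℝ) < y i₂ - y i₁ + σ * (x i₂ - x i₁)) hB,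
      mul_nonneg (by linarith : (0:ℝ) ≤ x i₂ - x i₁)
        (by linarith : (0:ℝ) ≤ -σ * (x k + 1 - x i₁) - (-σ * (x k + (j₁ : ℝ)) - y i₁))]
  have hFq : j₂ < j₁ →
      0 < (-σ * (x k + (j₂ : ℝ)) - y i₁) * (x k + 1 - x i₁)
        - (x k + 1 - x i₁) * (-σ * (x k + (j₁ : ℝ)) - y i₁) := by
    intro hlt
    have hjj : (j₂ : ℝ) < (j₁ : ℝ) := by exact_mod_cast hlt
    nlinarith [mul_pos hB (by nlinarith : (0:ℝ) < σ * ((j₁ : ℝ) - (j₂ : ℝ)))]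
  rcases eq_or_lt_of_le h12 with hi | hi
  · -- i₁ = i₂
    subst hi
    rcases eq_or_lt_of_le hj21 with hj | hj
    · exact absurd (by rw [hj]) hne
    · have hFq' := hFq hj
      have hFp0 : (y i₁ - y i₁) * (x k + 1 - x i₁)
          - (x i₁ - x i₁) * (-σ * (x k + (j₁ : ℝ)) - y i₁) = 0 := by ring
      rw [hFp0, mul_zero, zero_add] at key
      have hd0 : d = 0 := by
        rcases eq_or_lt_of_le hd with h0 | h0
        · exact h0.symm
        · nlinarith
      have hc1 : c = 1 := by linarith
      have hz' : z = ((x i₁, y i₁) : ℝ × ℝ) :=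
        Prod.ext (by rw [← e3, hc1, hd0]; ring) (by rw [← e4, hc1, hd0]; ring)
      exact ⟨by simp [hz'], by simp [hz']⟩
  · rcases eq_or_lt_of_le hj21 with hj | hj
    · -- j₂ = j₁ : common right endpoint
      subst hj
      have hFp' := hFp hi
      have hFq0 : (-σ * (x k + (j₂ : ℝ)) - y i₁) * (x k + 1 - x i₁)
          - (x k + 1 - x i₁) * (-σ * (x k + (j₂ : ℝ)) - y i₁) = 0 := by ring
      rw [hFq0, mul_zero, add_zero] at key
      have hc0 : c = 0 := by
        rcases eq_or_lt_of_le hc with h0 | h0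
        · exact h0.symm
        · nlinarith
      have hd1 : d = 1 := by linarith
      have hz' : z = ((x k + 1, -σ * (x k + (j₂ : ℝ))) : ℝ × ℝ) :=
        Prod.ext (by rw [← e3, hc0, hd1]; ring) (by rw [← e4, hc0, hd1]; ring)
      exact ⟨by simp [hz'], by simp [hz']⟩
    · -- both strict: contradiction
      exfalso
      have hFp' := hFp hi
      have hFq' := hFq hj
      have h1 := mul_nonneg hc hFp'.le
      have h2 := mul_nonneg hd hFq'.le
      have hc0 : c = 0 := by
        rcases eq_or_lt_of_le hc with h0 | h0
        · exact h0.symm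
        · nlinarith
      have hd0 : d = 0 := by
        rcases eq_or_lt_of_le hd with h0 | h0
        · exact h0.symm
        · nlinarith
      linarith
end

section
/- Let G be an internally triangulated plane graph (every internal face is a triangle) whose external boundary is a simple cycle C with at least 4 vertices. Then G is 3-connected if and only if no edge of G connects two non-consecutive vertices of C. -/
/-!
If there is no chord, remove two vertices `x` and `z`, where `z` is interior unless both are on
the boundary. The neighbours of `z` in rotation order form a path, consecutive neighbours
spanning a triangle; the path closes up unless `z` is on the boundary, where the outer face
breaks it. Started at the right dart, this path either avoids `x` or has `x` at an end (for
boundary `z` because `x` can only be a neighbour along the boundary), so the neighbours of `z`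
other than `x` stay connected in `G - {x, z}`, and every path of the 2-connected graph `G - x`
can be rerouted around `z`.

Conversely, a chord `uv` together with a boundary arc from `u` to `v` is a cycle over `ℤ/2`.
Euler's formula makes the first homology of the sphere vanish, so this cycle bounds a set of
faces avoiding the outer face. All faces at an inner vertex of the arc except the outer one
belong to that set, while at a vertex off the arc either all faces or none do. So no path of
`G - {u, v}` leads from the vertex after `v` on the boundary to the vertex after `u`.
-/

open Function Relation Equiv
open scoped Classical

namespace Equiv.Perm

variable {α : Type*}

section

variable (f : Perm α) (x : α)

theorem minimalPeriod_pos_of_finite [Finite α] : 0 < minimalPeriod f x :=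
  IsPeriodicPt.minimalPeriod_pos (orderOf_pos f) <| by
    simp [IsPeriodicPt, IsFixedPt, ← coe_pow, pow_orderOf_eq_one]

theorem pow_minimalPeriod_apply : (f ^ minimalPeriod f x) x = x := by
  rw [coe_pow]; exact iterate_minimalPeriod

theorem pow_minimalPeriod_sub_one_apply [Finite α] : (f ^ (minimalPeriod f x - 1)) x = f⁻¹ x := by
  rw [eq_inv_iff_eq, ← mul_apply, ← pow_succ',
    Nat.sub_add_cancel (minimalPeriod_pos_of_finite f x), pow_minimalPeriod_apply]

end

variable {f : Perm α} {x y : α}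

theorem eq_of_pow_apply_eq {s t : ℕ} (hs : s < minimalPeriod f x) (ht : t < minimalPeriod f x)
    (h : (f ^ s) x = (f ^ t) x) : s = t :=
  iterate_injOn_Iio_minimalPeriod hs ht (by simpa only [coe_pow] using h)

theorem SameCycle.exists_pow_eq_of_lt_minimalPeriod [Finite α] (h : f.SameCycle x y) :
    ∃ t < minimalPeriod f x, (f ^ t) x = y := by
  obtain ⟨n, rfl⟩ := h.exists_nat_pow_eq
  exact ⟨n % minimalPeriod f x, Nat.mod_lt _ (minimalPeriod_pos_of_finite f x), by
    simp only [coe_pow, iterate_mod_minimalPeriod_eq]⟩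

theorem quot_mk_eq_quot_mk_iff_sameCycle :
    Quot.mk (fun a b => f a = b) x = Quot.mk _ y ↔ f.SameCycle x y := by
  refine ⟨fun h => (SameCycle.equivalence f).eqvGen_iff.1 <|
    (Quot.eqvGen_exact h).mono fun a b hab => ⟨1, by simp [hab]⟩, ?_⟩
  rintro ⟨n, rfl⟩
  induction n using Int.induction_on with
  | zero => rfl
  | succ n ih => rw [ih, add_comm, zpow_one_add, mul_apply]; exact Quot.sound rfl
  | pred n ih =>
    rw [ih, sub_eq_neg_add, zpow_add, zpow_neg_one, mul_apply]
    exact (Quot.sound (r := fun a b => f a = b) (f.apply_symm_apply _)).symm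

end Equiv.Perm

namespace SimpleGraph

variable {V : Type*} (G : SimpleGraph V)

def AdjIn (s : Set V) (u v : V) : Prop := G.Adj u v ∧ u ∈ s ∧ v ∈ s

variable {G} {s : Set V}

instance : Std.Symm (G.AdjIn s) := ⟨fun _ _ h => ⟨h.1.symm, h.2.2, h.2.1⟩⟩

theorem induce_connected_iff :
    (G.induce s).Connected ↔ s.Nonempty ∧ ∀ a ∈ s, ∀ b ∈ s, ReflTransGen (G.AdjIn s) a b := by
  refine ⟨fun h => ⟨Set.nonempty_coe_sort.1 h.nonempty, fun a ha b hb => ?_⟩, fun ⟨hne, h⟩ => ?_⟩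
  · have := (reachable_iff_reflTransGen _ _).1 (h.preconnected ⟨a, ha⟩ ⟨b, hb⟩)
    exact this.lift Subtype.val fun u v huv => ⟨huv, u.2, v.2⟩
  · have : Nonempty s := hne.to_subtype
    refine .mk fun ⟨a, ha⟩ ⟨b, hb⟩ => ?_
    induction h a ha b hb with
    | refl => rfl
    | tail _ hstep ih => exact (ih hstep.2.1).trans (Adj.reachable hstep.1)

theorem not_reflTransGen_adjIn_of_closed {S : Set V}
    (hS : ∀ a b, a ∈ S → G.AdjIn s a b → b ∈ S) {a b : V} (ha : a ∈ S) (hb : b ∉ S) :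
    ¬ ReflTransGen (G.AdjIn s) a b := by
  intro h
  induction h with
  | refl => exact hb ha
  | tail _ hstep ih => exact ih fun hc => hb (hS _ _ hc hstep)

theorem reflTransGen_adjIn_diff_singleton {z a b : V}
    (hlink : ∀ p q, G.Adj z p → G.Adj z q → p ∈ s → q ∈ s →
      ReflTransGen (G.AdjIn (s \ {z})) p q)
    (ha : a ≠ z) (hb : b ≠ z) (h : ReflTransGen (G.AdjIn s) a b) :
    ReflTransGen (G.AdjIn (s \ {z})) a b := by
  -- a walk through `z` is rerouted between the neighbours of `z` it uses
  suffices ∀ c, ReflTransGen (G.AdjIn s) a c → ∃ p, ReflTransGen (G.AdjIn (s \ {z})) a p ∧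
      p ≠ z ∧ (p = c ∨ c = z ∧ G.Adj z p ∧ p ∈ s) by
    obtain ⟨p, hp, -, rfl | ⟨rfl, -⟩⟩ := this b h
    exacts [hp, absurd rfl hb]
  intro c hc
  induction hc with
  | refl => exact ⟨a, .refl, ha, .inl rfl⟩
  | @tail c d _ hcd ih =>
    obtain ⟨hadj, hc, hd⟩ := hcd
    obtain ⟨p, hp, hpz, rfl | ⟨rfl, hzp, hps⟩⟩ := ih
    · by_cases hdz : d = z
      · exact ⟨p, hp, hpz, .inr ⟨hdz, hdz ▸ hadj.symm, hc⟩⟩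
      · exact ⟨d, hp.tail ⟨hadj, ⟨hc, hpz⟩, ⟨hd, hdz⟩⟩, hdz, .inl rfl⟩
    · exact ⟨d, hp.trans (hlink p d hzp hadj hps hd), hadj.ne.symm, .inl rfl⟩

end SimpleGraph

noncomputable section

/-- A connected combinatorial map on the sphere: `σ` rotates the darts around their vertex, `α`
reverses them, and the faces are the orbits of `σ * α`. -/
structure PlanarMap (V D : Type*) [Fintype V] where
  σ : Perm D
  α : Perm D
  vtx : D → V
  α_α : ∀ d, α (α d) = d
  vtx_σ : ∀ d, vtx (σ d) = vtx d
  vtx_surjective : Surjective vtx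
  reflTransGen : ∀ d e : D, ReflTransGen (fun a b => σ a = b ∨ α a = b) d e
  euler : (Fintype.card V : ℤ) - Nat.card (Quot fun a b : D => α a = b)
      + Nat.card (Quot fun a b : D => (σ * α) a = b) = 2
  vtx_α_ne : ∀ d, vtx (α d) ≠ vtx d

namespace PlanarMap

variable {V D : Type*} [Fintype V] (M : PlanarMap V D)

def φ : Perm D := M.σ * M.α

abbrev Edge : Type _ := Quot fun a b : D => M.α a = b

abbrev Face : Type _ := Quot fun a b : D => M.φ a = b

def edge (d : D) : M.Edge := Quot.mk _ d

def face (d : D) : M.Face := Quot.mk _ d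

def graph : SimpleGraph V := SimpleGraph.fromRel fun a b => ∃ d, M.vtx d = a ∧ M.vtx (M.α d) = b

theorem α_ne (d : D) : M.α d ≠ d := fun h => M.vtx_α_ne d (by rw [h])

theorem φ_apply (d : D) : M.φ d = M.σ (M.α d) := rfl

theorem φ_α (d : D) : M.φ (M.α d) = M.σ d := by rw [φ_apply, M.α_α]

theorem vtx_φ (d : D) : M.vtx (M.φ d) = M.vtx (M.α d) := M.vtx_σ _

theorem α_φ_inv (d : D) : M.α (M.φ⁻¹ d) = M.σ⁻¹ d := by
  rw [Perm.eq_inv_iff_eq, ← φ_apply, Perm.eq_inv_iff_eq.1 rfl]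

theorem vtx_σ_pow (n : ℕ) (d : D) : M.vtx ((M.σ ^ n) d) = M.vtx d := by
  induction n with
  | zero => rfl
  | succ n ih => rw [pow_succ', Perm.mul_apply, M.vtx_σ, ih]

variable {M} in
theorem edge_eq_edge_iff {d e : D} : M.edge d = M.edge e ↔ e = d ∨ e = M.α d := by
  refine ⟨fun h => ?_, ?_⟩
  · have step : ∀ x, (x = d ∨ x = M.α d) → M.α x = d ∨ M.α x = M.α d := by
      rintro x (rfl | rfl)
      exacts [.inr rfl, .inl (M.α_α d)]
    obtain ⟨n, rfl⟩ := Perm.quot_mk_eq_quot_mk_iff_sameCycle.1 h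
    clear h
    induction n using Int.induction_on with
    | zero => exact .inl rfl
    | succ n ih => rw [add_comm, zpow_one_add, Perm.mul_apply]; exact step _ ih
    | pred n ih =>
      rw [sub_eq_neg_add, zpow_add, zpow_neg_one, Perm.mul_apply,
        Perm.inv_eq_iff_eq.2 (M.α_α _).symm]
      exact step _ ih
  · rintro (rfl | rfl)
    exacts [rfl, Quot.sound rfl]

theorem edge_α (d : D) : M.edge (M.α d) = M.edge d :=
  (edge_eq_edge_iff.2 (.inr rfl)).symm

variable {M} in
theorem face_eq_face_iff {d e : D} : M.face d = M.face e ↔ M.φ.SameCycle d e :=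
  Perm.quot_mk_eq_quot_mk_iff_sameCycle

theorem face_φ (d : D) : M.face (M.φ d) = M.face d :=
  face_eq_face_iff.2 (Perm.SameCycle.refl M.φ d).apply_right |>.symm

theorem face_σ (d : D) : M.face (M.σ d) = M.face (M.α d) := by
  rw [← φ_α, face_φ]

variable {M} in
theorem graph_adj_iff {a b : V} : M.graph.Adj a b ↔ ∃ d, M.vtx d = a ∧ M.vtx (M.α d) = b := by
  refine ⟨fun ⟨_, h⟩ => h.elim id fun ⟨d, hd, hd'⟩ => ⟨M.α d, hd', by rwa [M.α_α]⟩, ?_⟩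
  rintro ⟨d, rfl, rfl⟩
  exact ⟨M.vtx_α_ne d |>.symm, .inl ⟨d, rfl, rfl⟩⟩

theorem graph_adj_vtx_α (d : D) : M.graph.Adj (M.vtx d) (M.vtx (M.α d)) :=
  graph_adj_iff.2 ⟨d, rfl, rfl⟩

section Homology

def faceBoundary : (M.Face → ZMod 2) →ₗ[ZMod 2] (M.Edge → ZMod 2) where
  toFun x e := x (M.face e.out) + x (M.face (M.α e.out))
  map_add' x y := by ext; simp only [Pi.add_apply]; abel
  map_smul' c x := by ext; simp only [Pi.smul_apply, smul_eq_mul, RingHom.id_apply]; ring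

variable {M}

theorem faceBoundary_apply_edge (x : M.Face → ZMod 2) (d : D) :
    M.faceBoundary x (M.edge d) = x (M.face d) + x (M.face (M.α d)) := by
  have h := edge_eq_edge_iff.1 (Quot.out_eq (M.edge d))
  change x (M.face (M.edge d).out) + x (M.face (M.α (M.edge d).out)) = _
  generalize (M.edge d).out = e at h ⊢
  obtain rfl | rfl := h
  exacts [rfl, by rw [M.α_α, add_comm]]

theorem faceBoundary_const (c : ZMod 2) : M.faceBoundary (fun _ => c) = 0 :=
  funext fun _ => CharTwo.add_self_eq_zero c

theorem face_eq_of_faceBoundary_eq_zero {x : M.Face → ZMod 2} (hx : M.faceBoundary x = 0)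
    (d e : D) : x (M.face d) = x (M.face e) := by
  have hα (d : D) : x (M.face (M.α d)) = x (M.face d) := by
    have := congrFun hx (M.edge d)
    rw [faceBoundary_apply_edge, Pi.zero_apply, CharTwo.add_eq_zero] at this
    exact this.symm
  induction M.reflTransGen d e with
  | refl => rfl
  | tail _ hstep ih => obtain rfl | rfl := hstep <;> simp only [face_σ, hα, ih]

theorem finrank_ker_faceBoundary_le_one :
    Module.finrank (ZMod 2) (LinearMap.ker M.faceBoundary) ≤ 1 := by
  have : LinearMap.ker M.faceBoundary ≤ Submodule.span (ZMod 2) {fun _ => 1} := by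
    intro x hx
    rcases isEmpty_or_nonempty D with hD | ⟨⟨d⟩⟩
    · exact (funext fun q => isEmptyElim q.out : x = 0) ▸ Submodule.zero_mem _
    · refine Submodule.mem_span_singleton.2 ⟨x (M.face d), funext fun q => ?_⟩
      induction q using Quot.ind with
      | _ e => exact (mul_one _).trans (face_eq_of_faceBoundary_eq_zero hx d e)
  refine (Submodule.finrank_mono this).trans ?_
  simpa using finrank_span_le_card ({fun _ => 1} : Set (M.Face → ZMod 2))

theorem apply_face_α_of_faceBoundary_eq {x : M.Face → ZMod 2} {y : M.Edge → ZMod 2}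
    (hx : M.faceBoundary x = y) (d : D) :
    x (M.face (M.α d)) = x (M.face d) + y (M.edge d) := by
  rw [← hx, faceBoundary_apply_edge, CharTwo.add_cancel_left]

theorem apply_face_σ_pow_of_faceBoundary_eq {x : M.Face → ZMod 2} {y : M.Edge → ZMod 2}
    (hx : M.faceBoundary x = y) (n : ℕ) (d : D) :
    x (M.face ((M.σ ^ n) d)) = x (M.face d) + ∑ j ∈ Finset.range n, y (M.edge ((M.σ ^ j) d)) := by
  induction n with
  | zero => simp
  | succ n ih =>
    rw [pow_succ', Perm.mul_apply, face_σ, apply_face_α_of_faceBoundary_eq hx, ih,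
      Finset.sum_range_succ, add_assoc]

variable (M) [Fintype D]

instance : Fintype M.Edge := Fintype.ofFinite _

instance : Fintype M.Face := Fintype.ofFinite _

def edgeBoundary : (M.Edge → ZMod 2) →ₗ[ZMod 2] (V → ZMod 2) :=
  ∑ d : D, (LinearMap.proj (M.edge d)).smulRight (Pi.single (M.vtx d) 1)

variable {M}

theorem edgeBoundary_apply (y : M.Edge → ZMod 2) :
    M.edgeBoundary y = ∑ d, y (M.edge d) • Pi.single (M.vtx d) 1 := by
  simp [edgeBoundary]

theorem edgeBoundary_single (d : D) :
    M.edgeBoundary (Pi.single (M.edge d) 1) =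
      Pi.single (M.vtx d) 1 + Pi.single (M.vtx (M.α d)) 1 := by
  rw [edgeBoundary_apply, Fintype.sum_eq_add d (M.α d) (M.α_ne d).symm]
  · simp [edge_α]
  · rintro e ⟨hd, hαd⟩
    have : M.edge e ≠ M.edge d := fun h => (edge_eq_edge_iff.1 h.symm).elim hd hαd
    simp [this]

theorem edgeBoundary_faceBoundary (x : M.Face → ZMod 2) :
    M.edgeBoundary (M.faceBoundary x) = 0 := by
  simp only [edgeBoundary_apply, faceBoundary_apply_edge, add_smul, Finset.sum_add_distrib]
  have : ∑ d, x (M.face (M.α d)) • Pi.single (M.vtx d) (1 : ZMod 2) =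
      ∑ d, x (M.face d) • Pi.single (M.vtx d) 1 := by
    symm
    rw [← Equiv.sum_comp M.σ]
    simp only [face_σ, M.vtx_σ]
  rw [this, ZModModule.add_self]

theorem single_add_single_mem_range_edgeBoundary (v w : V) :
    Pi.single v 1 + Pi.single w 1 ∈ LinearMap.range M.edgeBoundary := by
  obtain ⟨d, rfl⟩ := M.vtx_surjective v
  obtain ⟨e, rfl⟩ := M.vtx_surjective w
  induction M.reflTransGen d e with
  | refl => simp [ZModModule.add_self]
  | @tail b c _ hstep ih =>
    obtain rfl | rfl := hstep
    · rwa [M.vtx_σ]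
    · convert add_mem ih ⟨_, edgeBoundary_single b⟩ using 1
      exact (ZModModule.add_add_add_cancel _ _ _).symm

theorem mem_range_edgeBoundary_of_sum_eq_zero {f : V → ZMod 2} (hf : ∑ v, f v = 0) :
    f ∈ LinearMap.range M.edgeBoundary := by
  rcases isEmpty_or_nonempty V with hV | ⟨⟨w⟩⟩
  · exact Subsingleton.elim 0 f ▸ zero_mem _
  · have : f = ∑ v, f v • (Pi.single v 1 + Pi.single w 1) := by
      simp only [smul_add, Finset.sum_add_distrib, ← Finset.sum_smul, hf, zero_smul, add_zero]
      ext u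
      simp [Pi.single_apply]
    rw [this]
    exact Submodule.sum_mem _ fun v _ =>
      Submodule.smul_mem _ _ (single_add_single_mem_range_edgeBoundary v w)

theorem range_faceBoundary_eq_ker_edgeBoundary :
    LinearMap.range M.faceBoundary = LinearMap.ker M.edgeBoundary := by
  refine Submodule.eq_of_le_of_finrank_le ?_ ?_
  · rintro _ ⟨x, rfl⟩
    exact edgeBoundary_faceBoundary x
  let sum : (V → ZMod 2) →ₗ[ZMod 2] ZMod 2 := ∑ v, LinearMap.proj v
  have hsum : LinearMap.ker sum ≤ LinearMap.range M.edgeBoundary := fun f hf =>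
    mem_range_edgeBoundary_of_sum_eq_zero (by simpa [sum] using hf)
  have h₀ := LinearMap.finrank_range_add_finrank_ker sum
  have h₁ := LinearMap.finrank_range_add_finrank_ker M.edgeBoundary
  have h₂ := LinearMap.finrank_range_add_finrank_ker M.faceBoundary
  have := Submodule.finrank_mono hsum
  have := (Submodule.finrank_le (LinearMap.range sum)).trans_eq (Module.finrank_self (ZMod 2))
  have := finrank_ker_faceBoundary_le_one (M := M)
  have : (Fintype.card V : ℤ) - Fintype.card M.Edge + Fintype.card M.Face = 2 := by
    rw [← Nat.card_eq_fintype_card (α := M.Edge), ← Nat.card_eq_fintype_card (α := M.Face)]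
    exact M.euler
  simp only [Module.finrank_pi] at *
  omega

theorem exists_faceBoundary_eq {y : M.Edge → ZMod 2} (hy : M.edgeBoundary y = 0)
    (q : M.Face) : ∃ x, M.faceBoundary x = y ∧ x q = 0 := by
  obtain ⟨x, rfl⟩ : y ∈ LinearMap.range M.faceBoundary := by
    rwa [range_faceBoundary_eq_ker_edgeBoundary]
  exact ⟨x + fun _ => x q, by rw [map_add, faceBoundary_const, add_zero],
    CharTwo.add_self_eq_zero _⟩

end Homology

end PlanarMap

/-- A planar map whose faces other than the outer one (the face of `d₀`) are triangles, whose
outer face is a simple cycle, and whose graph is simple with the vertices as `σ`-orbits. -/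
structure DiskTriangulation (V D : Type*) [Fintype V] extends PlanarMap V D where
  exists_σ_pow_eq : ∀ d e, vtx d = vtx e → ∃ n : ℕ, (σ ^ n) d = e
  eq_of_vtx_eq_of_vtx_α_eq : ∀ d e, vtx d = vtx e → vtx (α d) = vtx (α e) → e = d
  d₀ : D
  pow_three_apply : ∀ d, (¬ ∃ n : ℕ, ((σ * α) ^ n) d₀ = d) → ((σ * α) ^ 3) d = d
  outer_inj : ∀ d e, (∃ n : ℕ, ((σ * α) ^ n) d₀ = d) → (∃ n : ℕ, ((σ * α) ^ n) d₀ = e) →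
    vtx d = vtx e → d = e

namespace DiskTriangulation

open PlanarMap SimpleGraph

variable {V D : Type*} [Fintype V] (M : DiskTriangulation V D)

def IsOuter (d : D) : Prop := ∃ n : ℕ, (M.φ ^ n) M.d₀ = d

def OnBoundary (v : V) : Prop := ∃ d, M.IsOuter d ∧ M.vtx d = v

def NoChord : Prop :=
  ∀ u v, M.OnBoundary u → M.OnBoundary v → M.graph.Adj u v →
    ∃ d, M.IsOuter d ∧ (M.vtx d = u ∧ M.vtx (M.α d) = v ∨ M.vtx d = v ∧ M.vtx (M.α d) = u)

variable {M}

theorem isOuter_iff_sameCycle [Finite D] {d : D} : M.IsOuter d ↔ M.φ.SameCycle M.d₀ d :=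
  ⟨fun ⟨n, h⟩ => ⟨n, by simpa using h⟩, fun h => h.exists_nat_pow_eq⟩

theorem isOuter_iff_face_eq [Finite D] {d : D} : M.IsOuter d ↔ M.face d = M.face M.d₀ := by
  rw [isOuter_iff_sameCycle, eq_comm, face_eq_face_iff]

theorem IsOuter.φ_pow {d : D} (h : M.IsOuter d) (n : ℕ) : M.IsOuter ((M.φ ^ n) d) := by
  obtain ⟨m, rfl⟩ := h
  exact ⟨n + m, by rw [pow_add, Perm.mul_apply]⟩

theorem IsOuter.φ {d : D} (h : M.IsOuter d) : M.IsOuter (M.φ d) := by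
  simpa using h.φ_pow 1

theorem IsOuter.φ_inv [Finite D] {d : D} (h : M.IsOuter d) : M.IsOuter (M.φ⁻¹ d) :=
  isOuter_iff_sameCycle.2 <| Perm.sameCycle_symm_apply_right.2 (isOuter_iff_sameCycle.1 h)

theorem IsOuter.eq_of_vtx_eq {d e : D} (hd : M.IsOuter d) (he : M.IsOuter e)
    (h : M.vtx d = M.vtx e) : d = e :=
  M.outer_inj d e hd he h

theorem IsOuter.exists_φ_pow_eq [Finite D] {o d : D} (ho : M.IsOuter o) (hd : M.IsOuter d) :
    ∃ t < minimalPeriod M.φ o, (M.φ ^ t) o = d :=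
  ((isOuter_iff_sameCycle.1 ho).symm.trans
    (isOuter_iff_sameCycle.1 hd)).exists_pow_eq_of_lt_minimalPeriod

theorem IsOuter.eq_of_vtx_φ_pow_eq {o : D} (ho : M.IsOuter o) {s t : ℕ}
    (hs : s < minimalPeriod M.φ o) (ht : t < minimalPeriod M.φ o)
    (h : M.vtx ((M.φ ^ s) o) = M.vtx ((M.φ ^ t) o)) : s = t :=
  Perm.eq_of_pow_apply_eq hs ht ((ho.φ_pow s).eq_of_vtx_eq (ho.φ_pow t) h)

theorem IsOuter.ncard_onBoundary_le [Finite D] {o : D} (ho : M.IsOuter o) :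
    {v | M.OnBoundary v}.ncard ≤ minimalPeriod M.φ o := by
  have : {v | M.OnBoundary v} ⊆
      (fun t => M.vtx ((M.φ ^ t) o)) '' Set.Iio (minimalPeriod M.φ o) := by
    rintro _ ⟨d, hd, rfl⟩
    obtain ⟨t, ht, rfl⟩ := ho.exists_φ_pow_eq hd
    exact ⟨t, ht, rfl⟩
  refine (Set.ncard_le_ncard this ((Set.finite_Iio _).image _)).trans ?_
  exact (Set.ncard_image_le (Set.finite_Iio _)).trans (by simp)

theorem vtx_eq_vtx_iff_exists_σ_pow_eq [Finite D] {d e : D} :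
    M.vtx d = M.vtx e ↔ ∃ j < minimalPeriod M.σ d, (M.σ ^ j) d = e := by
  refine ⟨fun h => ?_, fun ⟨j, _, h⟩ => h ▸ (M.vtx_σ_pow j d).symm⟩
  obtain ⟨n, hn⟩ := M.exists_σ_pow_eq d e h
  exact Perm.SameCycle.exists_pow_eq_of_lt_minimalPeriod ⟨n, by simpa using hn⟩

theorem graph_adj_of_not_isOuter_α {d : D} (h : ¬ M.IsOuter (M.α d)) :
    M.graph.Adj (M.vtx (M.α d)) (M.vtx (M.α (M.σ d))) := by
  have h3 : (M.φ ^ 3) (M.α d) = M.α d := M.pow_three_apply (M.α d) h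
  rw [pow_succ, pow_succ, pow_one, Perm.mul_apply, Perm.mul_apply, M.φ_α] at h3
  -- the third side of the triangle on `α d` is the edge of `φ (σ d)`
  have hα : M.vtx (M.α (M.φ (M.σ d))) = M.vtx (M.α d) := by
    rw [← M.vtx_σ, ← M.φ_apply, h3]
  simpa only [M.vtx_φ, hα] using (M.graph_adj_vtx_α (M.φ (M.σ d))).symm

theorem IsOuter.eq_σ_inv_of_isOuter_α {o d : D} (ho : M.IsOuter o) (hd : M.vtx d = M.vtx o)
    (h : M.IsOuter (M.α d)) : d = M.σ⁻¹ o := by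
  rw [Perm.eq_inv_iff_eq]
  exact (M.φ_α d ▸ h.φ).eq_of_vtx_eq ho (by rw [M.vtx_σ, hd])

theorem not_isOuter_α_of_not_onBoundary {d : D} (h : ¬ M.OnBoundary (M.vtx d)) :
    ¬ M.IsOuter (M.α d) :=
  fun hα => h ⟨M.σ d, M.φ_α d ▸ hα.φ, M.vtx_σ d⟩

variable (M) in
def link (h : D) (j : ℕ) : V := M.vtx (M.α ((M.σ ^ j) h))

theorem graph_adj_link (h : D) (j : ℕ) : M.graph.Adj (M.vtx h) (M.link h j) := by
  simpa only [link, M.vtx_σ_pow] using M.graph_adj_vtx_α ((M.σ ^ j) h)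

theorem eq_of_link_eq {h : D} {i j : ℕ} (hi : i < minimalPeriod M.σ h)
    (hj : j < minimalPeriod M.σ h) (hij : M.link h i = M.link h j) : i = j :=
  Perm.eq_of_pow_apply_eq hi hj
    (M.eq_of_vtx_eq_of_vtx_α_eq _ _ (by rw [M.vtx_σ_pow, M.vtx_σ_pow]) hij).symm

theorem exists_link_eq [Finite D] {h : D} {p : V} (hp : M.graph.Adj (M.vtx h) p) :
    ∃ j < minimalPeriod M.σ h, M.link h j = p := by
  obtain ⟨d, hd, rfl⟩ := graph_adj_iff.1 hp
  obtain ⟨j, hj, rfl⟩ := vtx_eq_vtx_iff_exists_σ_pow_eq.1 hd.symm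
  exact ⟨j, hj, rfl⟩

theorem graph_adj_link_succ {h : D} {j : ℕ} (hj : ¬ M.IsOuter (M.α ((M.σ ^ j) h))) :
    M.graph.Adj (M.link h j) (M.link h (j + 1)) := by
  rw [link, link, pow_succ', Perm.mul_apply]
  exact graph_adj_of_not_isOuter_α hj

theorem reflTransGen_link_of_Icc {x : V} {h : D} {lo hi : ℕ}
    (hgap : ∀ j, lo ≤ j → j < hi → ¬ M.IsOuter (M.α ((M.σ ^ j) h)))
    (hx : ∀ j, lo ≤ j → j ≤ hi → M.link h j ≠ x) {i j : ℕ}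
    (hiI : lo ≤ i ∧ i ≤ hi) (hjI : lo ≤ j ∧ j ≤ hi) :
    ReflTransGen (M.graph.AdjIn ({x}ᶜ \ {M.vtx h})) (M.link h i) (M.link h j) := by
  wlog hij : i ≤ j generalizing i j
  · exact Std.Symm.symm _ _ (this hjI hiI (by omega))
  have hmem (k : ℕ) (hk : lo ≤ k ∧ k ≤ hi) : M.link h k ∈ ({x}ᶜ \ {M.vtx h} : Set V) :=
    ⟨hx k hk.1 hk.2, (M.graph_adj_link h k).ne.symm⟩
  induction j, hij using Nat.le_induction with
  | base => rfl
  | succ j hij ih =>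
    exact (ih ⟨by omega, by omega⟩).tail ⟨graph_adj_link_succ (hgap j (by omega) (by omega)),
      hmem j ⟨by omega, by omega⟩, hmem (j + 1) hjI⟩

variable (M) in
/-- Turning around the vertex of `h`, starting at `h`, the faces between consecutive neighbours
are inner ones except possibly after the last step, and `x` is either not a neighbour or one
of the two ends of the path of neighbours `link h 0, …, link h (minimalPeriod σ h - 1)`. -/
def IsLinkStart (x : V) (h : D) : Prop :=
  (∀ j, j + 1 < minimalPeriod M.σ h → ¬ M.IsOuter (M.α ((M.σ ^ j) h))) ∧
    ((∀ j < minimalPeriod M.σ h, M.link h j ≠ x) ∨ M.link h 0 = x ∨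
      M.link h (minimalPeriod M.σ h - 1) = x)

theorem IsLinkStart.reflTransGen [Finite D] {x : V} {h : D} (hh : M.IsLinkStart x h) {p q : V}
    (hp : M.graph.Adj (M.vtx h) p) (hq : M.graph.Adj (M.vtx h) q) (hpx : p ≠ x) (hqx : q ≠ x) :
    ReflTransGen (M.graph.AdjIn ({x}ᶜ \ {M.vtx h})) p q := by
  have hm := Perm.minimalPeriod_pos_of_finite M.σ h
  have hfirst (j : ℕ) (hj : j < minimalPeriod M.σ h) :
      M.link h j ≠ M.link h 0 ↔ 1 ≤ j ∧ j ≤ minimalPeriod M.σ h - 1 := by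
    refine ⟨fun hne => ?_, fun hj' heq => ?_⟩
    · have : j ≠ 0 := by rintro rfl; exact hne rfl
      omega
    · have := eq_of_link_eq hj hm heq
      omega
  obtain ⟨lo, hi, hhi, hx⟩ : ∃ lo hi, hi < minimalPeriod M.σ h ∧
      ∀ j < minimalPeriod M.σ h, M.link h j ≠ x ↔ lo ≤ j ∧ j ≤ hi := by
    obtain hx | rfl | rfl := hh.2
    · exact ⟨0, _, Nat.sub_one_lt hm.ne', fun j hj => by simp [hx j hj]; omega⟩
    · exact ⟨1, _, Nat.sub_one_lt hm.ne', hfirst⟩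
    · by_cases hm1 : minimalPeriod M.σ h - 1 = 0
      · exact ⟨1, _, Nat.sub_one_lt hm.ne', hm1 ▸ hfirst⟩
      refine ⟨0, minimalPeriod M.σ h - 2, by omega,
        fun j hj => ⟨fun hne => ⟨j.zero_le, ?_⟩, fun hj' heq => ?_⟩⟩
      · have : j ≠ minimalPeriod M.σ h - 1 := by rintro rfl; exact hne rfl
        omega
      · have := eq_of_link_eq hj (Nat.sub_one_lt hm.ne') heq
        omega
  obtain ⟨i, hi, rfl⟩ := exists_link_eq hp
  obtain ⟨j, hj, rfl⟩ := exists_link_eq hq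
  exact reflTransGen_link_of_Icc (fun k h1 h2 => hh.1 k (by omega))
    (fun k h1 h2 => (hx k (by omega)).2 ⟨h1, h2⟩) ((hx i hi).1 hpx) ((hx j hj).1 hqx)

theorem exists_isLinkStart_of_not_onBoundary [Finite D] {z : V} (hz : ¬ M.OnBoundary z)
    (x : V) : ∃ h, M.vtx h = z ∧ M.IsLinkStart x h := by
  have hgap (h : D) (hh : M.vtx h = z) (j : ℕ) : ¬ M.IsOuter (M.α ((M.σ ^ j) h)) :=
    not_isOuter_α_of_not_onBoundary (by rwa [M.vtx_σ_pow, hh])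
  by_cases hx : ∃ d, M.vtx d = z ∧ M.vtx (M.α d) = x
  · obtain ⟨d, rfl, rfl⟩ := hx
    refine ⟨M.σ d, M.vtx_σ d, fun j _ => hgap _ (M.vtx_σ d) j, .inr (.inr ?_)⟩
    rw [link, Perm.pow_minimalPeriod_sub_one_apply, Perm.inv_eq_iff_eq.2 rfl]
  · obtain ⟨h, rfl⟩ := M.vtx_surjective z
    exact ⟨h, rfl, fun j _ => hgap h rfl j,
      .inl fun j _ hj => hx ⟨_, M.vtx_σ_pow j h, hj⟩⟩

theorem IsOuter.isLinkStart [Finite D] (hnc : M.NoChord) {o : D} (ho : M.IsOuter o) {x : V}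
    (hx : M.OnBoundary x) : M.IsLinkStart x o := by
  refine ⟨fun j hj hout => ?_, ?_⟩
  · have := ho.eq_σ_inv_of_isOuter_α (M.vtx_σ_pow j o) hout
    rw [← Perm.pow_minimalPeriod_sub_one_apply] at this
    have := Perm.eq_of_pow_apply_eq (by omega) (by omega) this
    omega
  by_cases hadj : M.graph.Adj (M.vtx o) x
  · obtain ⟨d, hd, ⟨hdo, rfl⟩ | ⟨rfl, hdα⟩⟩ := hnc _ _ ⟨o, ho, rfl⟩ hx hadj
    · rw [hd.eq_of_vtx_eq ho hdo]
      exact .inr (.inl rfl)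
    · have : M.φ d = o := hd.φ.eq_of_vtx_eq ho (by rw [M.vtx_φ, hdα])
      refine .inr (.inr ?_)
      rw [link, Perm.pow_minimalPeriod_sub_one_apply, ← M.α_φ_inv, M.α_α, ← this,
        Perm.inv_eq_iff_eq.2 rfl]
  · exact .inl fun j _ hj => hadj (hj ▸ M.graph_adj_link o j)

theorem threeConnected_of_noChord [Finite D] (hV : 2 < Fintype.card V)
    (h2 : ∀ S : Set V, S.ncard ≤ 1 → (M.graph.induce Sᶜ).Connected) (hnc : M.NoChord)
    (S : Set V) (hS : S.ncard ≤ 2) : (M.graph.induce Sᶜ).Connected := by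
  obtain hlt | hge := Nat.lt_or_ge S.ncard 2
  · exact h2 S (by omega)
  obtain ⟨a, b, hab, rfl⟩ := Set.ncard_eq_two.1 (le_antisymm hS hge)
  -- reroute around an interior vertex if there is one
  obtain ⟨z, x, hzx, hS, hz⟩ : ∃ z x, z ≠ x ∧ ({a, b} : Set V) = {z, x} ∧
      (¬ M.OnBoundary z ∨ M.OnBoundary z ∧ M.OnBoundary x) := by
    by_cases ha : M.OnBoundary a
    · by_cases hb : M.OnBoundary b
      · exact ⟨a, b, hab, rfl, .inr ⟨ha, hb⟩⟩
      · exact ⟨b, a, hab.symm, Set.pair_comm a b, .inl hb⟩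
    · exact ⟨a, b, hab, rfl, .inl ha⟩
  obtain ⟨h, rfl, hh⟩ : ∃ h, M.vtx h = z ∧ M.IsLinkStart x h := by
    rcases hz with hz | ⟨⟨o, ho, rfl⟩, hx⟩
    exacts [exists_isLinkStart_of_not_onBoundary hz x, ⟨o, rfl, ho.isLinkStart hnc hx⟩]
  have hcompl : ({M.vtx h, x} : Set V)ᶜ = {x}ᶜ \ {M.vtx h} := by ext; simp [and_comm]
  rw [hS, hcompl]
  refine induce_connected_iff.2 ⟨?_, fun p hp q hq => ?_⟩
  · rw [← hcompl, Set.nonempty_compl]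
    intro huniv
    have := Set.ncard_pair hzx
    rw [huniv, Set.ncard_univ, Nat.card_eq_fintype_card] at this
    omega
  · exact reflTransGen_adjIn_diff_singleton (fun _ _ => hh.reflTransGen) hp.2 hq.2
      ((induce_connected_iff.1 (h2 {x} (by simp))).2 p hp.1 q hq.1)

theorem IsOuter.φ_ne_α [Finite D] (hb : 3 ≤ {v | M.OnBoundary v}.ncard) {o : D}
    (ho : M.IsOuter o) : M.φ o ≠ M.α o := by
  intro h
  -- otherwise `φ (φ o) = σ o` lies at the vertex of `o`, so the outer face has length 2
  have h2 : M.φ (M.φ o) = o := ho.φ.φ.eq_of_vtx_eq ho (by rw [h, M.φ_α, M.vtx_σ])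
  have := (IsPeriodicPt.minimalPeriod_le two_pos (h2 : IsPeriodicPt M.φ 2 o)).trans'
    ho.ncard_onBoundary_le
  omega

theorem IsOuter.eq_of_edge_eq [Finite D] (hb : 3 ≤ {v | M.OnBoundary v}.ncard) {d e : D}
    (hd : M.IsOuter d) (he : M.IsOuter e) (h : M.edge d = M.edge e) : d = e := by
  obtain rfl | rfl := edge_eq_edge_iff.1 h
  · rfl
  · exact absurd (hd.φ.eq_of_vtx_eq he (M.vtx_φ d)) (hd.φ_ne_α hb)

theorem IsOuter.exists_chord_index [Finite D] {o : D} (ho : M.IsOuter o) {v : V}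
    (hv : M.OnBoundary v) (h0 : v ≠ M.vtx o) (h1 : M.vtx (M.α o) ≠ v)
    (h2 : M.vtx (M.φ⁻¹ o) ≠ v) :
    ∃ k, 2 ≤ k ∧ k + 2 ≤ minimalPeriod M.φ o ∧ M.vtx ((M.φ ^ k) o) = v := by
  obtain ⟨d, hd, rfl⟩ := hv
  obtain ⟨k, hk, rfl⟩ := ho.exists_φ_pow_eq hd
  have hk0 : k ≠ 0 := by rintro rfl; exact h0 rfl
  have hk1 : k ≠ 1 := by rintro rfl; exact h1 (by rw [pow_one, M.vtx_φ])
  have hkm : k ≠ minimalPeriod M.φ o - 1 := by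
    rintro rfl
    exact h2 (by rw [Perm.pow_minimalPeriod_sub_one_apply])
  exact ⟨k, by omega, by omega, rfl⟩

variable (M) in
def chordCycle (c o : D) (k : ℕ) : M.Edge → ZMod 2 :=
  Pi.single (M.edge c) 1 + ∑ t ∈ Finset.range k, Pi.single (M.edge ((M.φ ^ t) o)) 1

variable (M) in
def arc (o : D) (k : ℕ) : Set V := {w | ∃ t ≤ k, M.vtx ((M.φ ^ t) o) = w}

theorem edgeBoundary_chordCycle [Fintype D] {c o : D} {k : ℕ} (hc : M.vtx c = M.vtx o)
    (hcα : M.vtx (M.α c) = M.vtx ((M.φ ^ k) o)) : M.edgeBoundary (M.chordCycle c o k) = 0 := by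
  have (t : ℕ) : M.edgeBoundary (Pi.single (M.edge ((M.φ ^ t) o)) 1) =
      Pi.single (M.vtx ((M.φ ^ (t + 1)) o)) 1 - Pi.single (M.vtx ((M.φ ^ t) o)) 1 := by
    rw [edgeBoundary_single, ZModModule.sub_eq_add, add_comm, pow_succ', Perm.mul_apply,
      M.vtx_φ]
  rw [chordCycle, map_add, map_sum, Finset.sum_congr rfl fun t _ => this t,
    Finset.sum_range_sub (fun t => (Pi.single (M.vtx ((M.φ ^ t) o)) 1 : V → ZMod 2)),
    edgeBoundary_single, hc, hcα, ZModModule.sub_eq_add, pow_zero, Perm.one_apply,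
    ZModModule.add_add_add_cancel, ZModModule.add_self]

theorem chordCycle_apply_edge_eq_zero {c o e : D} {k : ℕ} (hc : M.edge e ≠ M.edge c)
    (ht : ∀ t < k, M.edge e ≠ M.edge ((M.φ ^ t) o)) : M.chordCycle c o k (M.edge e) = 0 := by
  rw [chordCycle, Pi.add_apply, Finset.sum_apply, Pi.single_eq_of_ne hc, zero_add]
  exact Finset.sum_eq_zero fun t ht' => Pi.single_eq_of_ne (ht t (Finset.mem_range.1 ht')) _

theorem chordCycle_apply_edge_φ_pow [Finite D] (hb : 3 ≤ {v | M.OnBoundary v}.ncard)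
    {c o : D} {k s : ℕ} (ho : M.IsOuter o) (hco : ¬ M.IsOuter c) (hcαo : ¬ M.IsOuter (M.α c))
    (hk : k ≤ minimalPeriod M.φ o) (hs : s < k) :
    M.chordCycle c o k (M.edge ((M.φ ^ s) o)) = 1 := by
  have hne : M.edge ((M.φ ^ s) o) ≠ M.edge c := fun h => by
    obtain rfl | rfl := edge_eq_edge_iff.1 h
    exacts [hco (ho.φ_pow s), hcαo (by rw [M.α_α]; exact ho.φ_pow s)]
  rw [chordCycle, Pi.add_apply, Pi.single_eq_of_ne hne, zero_add, Finset.sum_apply,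
    Finset.sum_eq_single s]
  · simp
  · intro t ht hts
    refine Pi.single_eq_of_ne (fun h => hts ?_) _
    exact (Perm.eq_of_pow_apply_eq (by omega) (by simp at ht; omega)
      ((ho.φ_pow s).eq_of_edge_eq hb (ho.φ_pow t) h)).symm
  · simp [hs]

theorem chordCycle_apply_edge_eq_zero_of_not_mem_arc {c o e : D} {k : ℕ}
    (hc : M.vtx c = M.vtx o) (hcα : M.vtx (M.α c) = M.vtx ((M.φ ^ k) o))
    (he : M.vtx e ∉ M.arc o k) : M.chordCycle c o k (M.edge e) = 0 := by
  refine chordCycle_apply_edge_eq_zero (fun h => ?_) (fun t ht h => ?_)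
  · obtain rfl | rfl := edge_eq_edge_iff.1 h.symm
    exacts [he ⟨0, k.zero_le, hc.symm⟩, he ⟨k, le_rfl, hcα.symm⟩]
  · obtain rfl | rfl := edge_eq_edge_iff.1 h.symm
    · exact he ⟨t, ht.le, rfl⟩
    · exact he ⟨t + 1, ht, by rw [pow_succ', Perm.mul_apply, M.vtx_φ]⟩

theorem chordCycle_apply_edge_eq_zero_at_arc {c o e : D} {k s : ℕ} (ho : M.IsOuter o)
    (hc : M.vtx c = M.vtx o) (hcα : M.vtx (M.α c) = M.vtx ((M.φ ^ k) o))
    (hkb : k < minimalPeriod M.φ o) (hs0 : 0 < s) (hsk : s < k)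
    (he : M.vtx e = M.vtx ((M.φ ^ s) o)) (he₁ : e ≠ (M.φ ^ s) o)
    (he₂ : e ≠ M.σ⁻¹ ((M.φ ^ s) o)) : M.chordCycle c o k (M.edge e) = 0 := by
  refine chordCycle_apply_edge_eq_zero (fun h => ?_) (fun t ht h => ?_)
  · obtain rfl | rfl := edge_eq_edge_iff.1 h.symm
    · have := ho.eq_of_vtx_φ_pow_eq (t := 0) (by omega) (by omega) (he.symm.trans hc)
      omega
    · have := ho.eq_of_vtx_φ_pow_eq (by omega) hkb (he.symm.trans hcα)
      omega
  · obtain rfl | rfl := edge_eq_edge_iff.1 h.symm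
    · exact he₁ ((ho.φ_pow t).eq_of_vtx_eq (ho.φ_pow s) he)
    · have : M.φ ((M.φ ^ t) o) = (M.φ ^ s) o :=
        (ho.φ_pow t).φ.eq_of_vtx_eq (ho.φ_pow s) (by rw [M.vtx_φ, he])
      apply he₂
      rw [← M.α_φ_inv, ← this, Perm.inv_def, Equiv.symm_apply_apply]

theorem apply_face_eq_zero_of_isOuter [Finite D] {x : M.Face → ZMod 2}
    (hx₀ : x (M.face M.d₀) = 0) {d : D} (hd : M.IsOuter d) : x (M.face d) = 0 := by
  rw [isOuter_iff_face_eq.1 hd, hx₀]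

theorem apply_face_eq_of_not_mem_arc [Finite D] {c o : D} {k : ℕ} {x : M.Face → ZMod 2}
    (hx : M.faceBoundary x = M.chordCycle c o k) (hc : M.vtx c = M.vtx o)
    (hcα : M.vtx (M.α c) = M.vtx ((M.φ ^ k) o)) {d e : D}
    (hd : M.vtx d ∉ M.arc o k) (he : M.vtx e = M.vtx d) : x (M.face e) = x (M.face d) := by
  obtain ⟨n, -, rfl⟩ := vtx_eq_vtx_iff_exists_σ_pow_eq.1 he.symm
  rw [apply_face_σ_pow_of_faceBoundary_eq hx, Finset.sum_eq_zero, add_zero]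
  exact fun j _ => chordCycle_apply_edge_eq_zero_of_not_mem_arc hc hcα (by rwa [M.vtx_σ_pow])

theorem apply_face_eq_one_at_arc [Finite D] (hb : 3 ≤ {v | M.OnBoundary v}.ncard)
    {c o e : D} {k s : ℕ} {x : M.Face → ZMod 2} (hx : M.faceBoundary x = M.chordCycle c o k)
    (hx₀ : x (M.face M.d₀) = 0) (ho : M.IsOuter o) (hc : M.vtx c = M.vtx o)
    (hcα : M.vtx (M.α c) = M.vtx ((M.φ ^ k) o)) (hco : ¬ M.IsOuter c)
    (hcαo : ¬ M.IsOuter (M.α c)) (hkb : k < minimalPeriod M.φ o) (hs0 : 0 < s) (hsk : s < k)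
    (he : M.vtx e = M.vtx ((M.φ ^ s) o)) (he₁ : e ≠ (M.φ ^ s) o) : x (M.face e) = 1 := by
  obtain ⟨_ | n, hn, rfl⟩ := vtx_eq_vtx_iff_exists_σ_pow_eq.1 he.symm
  · exact absurd rfl he₁
  rw [apply_face_σ_pow_of_faceBoundary_eq hx, apply_face_eq_zero_of_isOuter hx₀ (ho.φ_pow s),
    Finset.sum_range_succ', Finset.sum_eq_zero, pow_zero, Perm.one_apply,
    chordCycle_apply_edge_φ_pow hb ho hco hcαo hkb.le hsk, zero_add, zero_add]
  intro j hj
  rw [Finset.mem_range] at hj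
  refine chordCycle_apply_edge_eq_zero_at_arc ho hc hcα hkb hs0 hsk (M.vtx_σ_pow _ _)
    (fun h => ?_) (fun h => ?_)
  · have := Perm.eq_of_pow_apply_eq (by omega) (Perm.minimalPeriod_pos_of_finite _ _)
      (h.trans (pow_zero M.σ ▸ rfl))
    omega
  · rw [← Perm.pow_minimalPeriod_sub_one_apply] at h
    have := Perm.eq_of_pow_apply_eq (by omega) (by omega) h
    omega

theorem apply_face_eq_zero_of_adjIn [Finite D] (hb : 3 ≤ {v | M.OnBoundary v}.ncard)
    {c o : D} {k : ℕ} {x : M.Face → ZMod 2} (hx : M.faceBoundary x = M.chordCycle c o k)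
    (hx₀ : x (M.face M.d₀) = 0) (ho : M.IsOuter o) (hc : M.vtx c = M.vtx o)
    (hcα : M.vtx (M.α c) = M.vtx ((M.φ ^ k) o)) (hco : ¬ M.IsOuter c)
    (hcαo : ¬ M.IsOuter (M.α c)) (hkb : k < minimalPeriod M.φ o) {w w' : V}
    (hw : w ∉ M.arc o k ∧ ∀ e, M.vtx e = w → x (M.face e) = 0)
    (hww' : M.graph.AdjIn {M.vtx o, M.vtx (M.α c)}ᶜ w w') :
    w' ∉ M.arc o k ∧ ∀ e, M.vtx e = w' → x (M.face e) = 0 := by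
  obtain ⟨hadj, -, hw'⟩ := hww'
  obtain ⟨d, rfl, rfl⟩ := graph_adj_iff.1 hadj
  have hαd : x (M.face (M.α d)) = 0 := by
    rw [apply_face_α_of_faceBoundary_eq hx, hw.2 d rfl,
      chordCycle_apply_edge_eq_zero_of_not_mem_arc hc hcα hw.1, add_zero]
  have harc : M.vtx (M.α d) ∉ M.arc o k := by
    rintro ⟨s, hs, hs'⟩
    have hs0 : s ≠ 0 := by rintro rfl; exact hw' (.inl hs'.symm)
    have hsk : s ≠ k := by rintro rfl; exact hw' (.inr (hs'.symm.trans hcα.symm))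
    have hne : M.α d ≠ (M.φ ^ s) o := by
      intro h
      refine hw.1 ⟨s + 1, by omega, ?_⟩
      rw [pow_succ', Perm.mul_apply, M.vtx_φ, ← h, M.α_α]
    have := apply_face_eq_one_at_arc hb hx hx₀ ho hc hcα hco hcαo hkb (by omega) (by omega)
      hs'.symm hne
    exact zero_ne_one (hαd.symm.trans this)
  exact ⟨harc, fun e he => (apply_face_eq_of_not_mem_arc hx hc hcα harc he).trans hαd⟩

theorem noChord_of_threeConnected [Fintype D] (hb : 3 ≤ {v | M.OnBoundary v}.ncard)
    (h3 : ∀ S : Set V, S.ncard ≤ 2 → (M.graph.induce Sᶜ).Connected) : M.NoChord := by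
  rintro u v ⟨o, ho, rfl⟩ hv hadj
  by_contra hno
  obtain ⟨c, hc, rfl⟩ := graph_adj_iff.1 hadj
  have hco : ¬ M.IsOuter c := fun h => hno ⟨c, h, .inl ⟨hc, rfl⟩⟩
  have hcαo : ¬ M.IsOuter (M.α c) := fun h => hno ⟨M.α c, h, .inr ⟨rfl, by rw [M.α_α, hc]⟩⟩
  obtain ⟨k, hk2, hkb, hcα⟩ := ho.exists_chord_index hv (hc ▸ M.vtx_α_ne c)
    (fun h => hno ⟨o, ho, .inl ⟨rfl, h⟩⟩)
    (fun h => hno ⟨_, ho.φ_inv, .inr ⟨h, by rw [← M.vtx_φ, Perm.eq_inv_iff_eq.1 rfl]⟩⟩)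
  obtain ⟨x, hx, hx₀⟩ := exists_faceBoundary_eq (edgeBoundary_chordCycle hc hcα.symm) (M.face M.d₀)
  have hmem (t : ℕ) (ht : t < minimalPeriod M.φ o) (ht0 : t ≠ 0) (htk : t ≠ k) :
      M.vtx ((M.φ ^ t) o) ∈ ({M.vtx o, M.vtx (M.α c)} : Set V)ᶜ := by
    rintro (h | h)
    · exact ht0 (ho.eq_of_vtx_φ_pow_eq (t := 0) ht (by omega) h)
    · exact htk (ho.eq_of_vtx_φ_pow_eq ht (by omega) (h.trans hcα.symm))
  refine not_reflTransGen_adjIn_of_closed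
    (S := {w | w ∉ M.arc o k ∧ ∀ e, M.vtx e = w → x (M.face e) = 0})
    (fun w w' hw hww' => apply_face_eq_zero_of_adjIn hb hx hx₀ ho hc hcα.symm hco hcαo
      (by omega) hw hww') ?_ (fun h => h.1 ⟨1, by omega, rfl⟩)
    ((induce_connected_iff.1 (h3 _ ((Set.ncard_insert_le _ _).trans (by simp)))).2 _
      (hmem (k + 1) (by omega) (by omega) (by omega)) _ (hmem 1 (by omega) (by omega) (by omega)))
  have harc : M.vtx ((M.φ ^ (k + 1)) o) ∉ M.arc o k := by
    rintro ⟨t, ht, h⟩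
    have := ho.eq_of_vtx_φ_pow_eq (by omega) (by omega) h
    omega
  exact ⟨harc, fun e he => (apply_face_eq_of_not_mem_arc hx hc hcα.symm harc he).trans
    (apply_face_eq_zero_of_isOuter hx₀ (ho.φ_pow _))⟩

end DiskTriangulation

end

theorem stmt18_general (V D : Type) [Fintype V] [Fintype D]
    (σ α : Equiv.Perm D) (vtx : D → V) (d₀ : D)
    (hinv : ∀ d, α (α d) = d)
    (hvσ : ∀ d, vtx (σ d) = vtx d)
    (hsurj : Function.Surjective vtx)
    (hfib : ∀ d e, vtx d = vtx e → ∃ n : ℕ, (σ ^ n) d = e)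
    (hconn : ∀ d e : D, Relation.ReflTransGen (fun a b => σ a = b ∨ α a = b) d e)
    (heuler : (Fintype.card V : ℤ)
        - (Nat.card (Quot (fun a b : D => α a = b)) : ℤ)
        + (Nat.card (Quot (fun a b : D => (σ * α) a = b)) : ℤ) = 2)
    (hnoloop : ∀ d : D, vtx (α d) ≠ vtx d)
    (hsimple : ∀ d e : D, vtx d = vtx e → vtx (α d) = vtx (α e) → e = d)
    -- every internal face (face not containing `d₀`) is a triangle
    (hint_tri : ∀ d : D, (¬ ∃ n : ℕ, ((σ * α) ^ n) d₀ = d) →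
      ((σ * α) ^ 3) d = d ∧ (σ * α) d ≠ d)
    -- the external boundary is a simple cycle: it visits each vertex once
    (houter_simple : ∀ d e : D, (∃ n : ℕ, ((σ * α) ^ n) d₀ = d) →
      (∃ n : ℕ, ((σ * α) ^ n) d₀ = e) → vtx d = vtx e → d = e)
    -- the external boundary has at least 4 vertices
    (houter_card :
      4 ≤ {v : V | ∃ d, (∃ n : ℕ, ((σ * α) ^ n) d₀ = d) ∧ vtx d = v}.ncard)
    -- `G` is 2-connected
    (h2conn : ∀ S : Set V, S.ncard ≤ 1 →
      ((SimpleGraph.fromRel (fun a b => ∃ d, vtx d = a ∧ vtx (α d) = b)).induce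
        Sᶜ).Connected) :
    -- `G` is 3-connected iff no edge joins two non-consecutive boundary vertices
    ((4 ≤ Fintype.card V ∧ ∀ S : Set V, S.ncard ≤ 2 →
        ((SimpleGraph.fromRel
            (fun a b => ∃ d, vtx d = a ∧ vtx (α d) = b)).induce Sᶜ).Connected)
      ↔
      (∀ u v : V,
        (∃ d, (∃ n : ℕ, ((σ * α) ^ n) d₀ = d) ∧ vtx d = u) →
        (∃ d, (∃ n : ℕ, ((σ * α) ^ n) d₀ = d) ∧ vtx d = v) →
        (SimpleGraph.fromRel (fun a b => ∃ d, vtx d = a ∧ vtx (α d) = b)).Adj u v →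
        (∃ d, (∃ n : ℕ, ((σ * α) ^ n) d₀ = d) ∧
          ((vtx d = u ∧ vtx (α d) = v) ∨ (vtx d = v ∧ vtx (α d) = u))))) := by
  let M : DiskTriangulation V D :=
    { σ, α, vtx, d₀
      α_α := hinv
      vtx_σ := hvσ
      vtx_surjective := hsurj
      reflTransGen := hconn
      euler := heuler
      vtx_α_ne := hnoloop
      exists_σ_pow_eq := hfib
      eq_of_vtx_eq_of_vtx_α_eq := hsimple
      pow_three_apply := fun d hd => (hint_tri d hd).1
      outer_inj := houter_simple }
  have hb : 4 ≤ {v | M.OnBoundary v}.ncard := houter_card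
  have hV : 4 ≤ Fintype.card V :=
    hb.trans ((Set.ncard_le_card _).trans_eq Nat.card_eq_fintype_card)
  exact ⟨fun h => M.noChord_of_threeConnected (by omega) h.2,
    fun hnc => ⟨hV, M.threeConnected_of_noChord (by omega) h2conn hnc⟩⟩

/-- Let `G` be an internally triangulated plane graph (a 2-connected plane
graph, given as a combinatorial map with a distinguished dart `d₀` on the outer
face, every internal face a triangle) whose external boundary is a simple cycle
with at least 4 vertices.  Then `G` is 3-connected if and only if no edge of
`G` connects two non-consecutive vertices of the external boundary. -/
theorem stmt18 (V D : Type) [Fintype V] [Fintype D]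
    (σ α : Equiv.Perm D) (vtx : D → V) (d₀ : D)
    (hinv : ∀ d, α (α d) = d) (hnf : ∀ d, α d ≠ d)
    (hvσ : ∀ d, vtx (σ d) = vtx d)
    (hsurj : Function.Surjective vtx)
    (hfib : ∀ d e, vtx d = vtx e → ∃ n : ℕ, (σ ^ n) d = e)
    (hconn : ∀ d e : D, Relation.ReflTransGen (fun a b => σ a = b ∨ α a = b) d e)
    (heuler : (Fintype.card V : ℤ)
        - (Nat.card (Quot (fun a b : D => α a = b)) : ℤ)
        + (Nat.card (Quot (fun a b : D => (σ * α) a = b)) : ℤ) = 2)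
    (hnoloop : ∀ d : D, vtx (α d) ≠ vtx d)
    (hsimple : ∀ d e : D, vtx d = vtx e → vtx (α d) = vtx (α e) → e = d)
    -- every internal face (face not containing `d₀`) is a triangle
    (hint_tri : ∀ d : D, (¬ ∃ n : ℕ, ((σ * α) ^ n) d₀ = d) →
      ((σ * α) ^ 3) d = d ∧ (σ * α) d ≠ d)
    -- the external boundary is a simple cycle: it visits each vertex once
    (houter_simple : ∀ d e : D, (∃ n : ℕ, ((σ * α) ^ n) d₀ = d) →
      (∃ n : ℕ, ((σ * α) ^ n) d₀ = e) → vtx d = vtx e → d = e)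
    -- the external boundary has at least 4 vertices
    (houter_card :
      4 ≤ {v : V | ∃ d, (∃ n : ℕ, ((σ * α) ^ n) d₀ = d) ∧ vtx d = v}.ncard)
    -- `G` is 2-connected
    (h2conn : ∀ S : Set V, S.ncard ≤ 1 →
      ((SimpleGraph.fromRel (fun a b => ∃ d, vtx d = a ∧ vtx (α d) = b)).induce
        Sᶜ).Connected) :
    -- `G` is 3-connected iff no edge joins two non-consecutive boundary vertices
    ((4 ≤ Fintype.card V ∧ ∀ S : Set V, S.ncard ≤ 2 →
        ((SimpleGraph.fromRel
            (fun a b => ∃ d, vtx d = a ∧ vtx (α d) = b)).induce Sᶜ).Connected)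
      ↔
      (∀ u v : V,
        (∃ d, (∃ n : ℕ, ((σ * α) ^ n) d₀ = d) ∧ vtx d = u) →
        (∃ d, (∃ n : ℕ, ((σ * α) ^ n) d₀ = d) ∧ vtx d = v) →
        (SimpleGraph.fromRel (fun a b => ∃ d, vtx d = a ∧ vtx (α d) = b)).Adj u v →
        (∃ d, (∃ n : ℕ, ((σ * α) ^ n) d₀ = d) ∧
          ((vtx d = u ∧ vtx (α d) = v) ∨ (vtx d = v ∧ vtx (α d) = u))))) :=
  stmt18_general V D σ α vtx d₀ hinv hvσ hsurj hfib hconn heuler hnoloop hsimple hint_tri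
    houter_simple houter_card h2conn
end
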